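/- arXiv:1710.01673 — 9 statements merged into one kernel-verified Lean document; each statement's English description precedes it below -/
import Mathlib

section
/- Let e, k, l be positive integers with k ≥ 2 and let N be a positive real number. Let a : ℤ → ℚ_p satisfy ‖a_i‖_p ≤ 1 for all i, a_i = 0 for all i < -k, and a_{-1} = 0 (the coefficients of a Laurent series of the second kind). Let ã : ℤ → ℚ_p satisfy ‖a_i - ã_i‖_p ≤ p^{-N} for all i, ã_i = 0 for i < -k and for i ≥ l, and ã_{-1} = 0 (the computed coefficients, accurate to precision N and truncated modulo t^l). Let s, s', s̃, s̃' ∈ K be nonzero elements with ‖s‖, ‖s'‖, ‖s̃‖, ‖s̃'‖ ≤ p^{-1/e}, with ‖s - s̃‖ ≤ p^{-N}, ‖s' - s̃'‖ ≤ p^{-N}, ‖s̃‖ = ‖s‖ and ‖s̃'‖ = ‖s'‖. Set μ = max(-log_p ‖s‖, -log_p ‖s'‖). Then the series Σ_{i ≥ -k, i ≠ -1} (a_i/(i+1))·(s'^{i+1} - s^{i+1}) converges in K, and for any real numbers ν₁, ν₂, ν₃ such that ν₁ ≤ (i+1)/e - ⌊log_p(i+1)⌋ for all i ≥ l, ν₂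 ≤ N + i/e - ⌊log_p(i+1)⌋ for all 0 ≤ i ≤ l-1, and ν₃ ≤ N - kμ - ⌊log_p(k-1)⌋, one has ‖ Σ_{i ≥ -k, i ≠ -1} (a_i/(i+1))·(s'^{i+1} - s^{i+1}) − Σ_{-k ≤ i ≤ l-1, i ≠ -1} (ã_i/(i+1))·(s̃'^{i+1} - s̃^{i+1}) ‖ ≤ max(p^{-ν₁}, p^{-ν₂}, p^{-ν₃}). -/
lemma aux_pow_sub_pow {K : Type*} [NormedField K]
    (hna : ∀ x y : K, ‖x + y‖ ≤ max ‖x‖ ‖y‖)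
    (x y : K) (h : ‖x‖ = ‖y‖) : ∀ n : ℕ, ‖x ^ (n+1) - y ^ (n+1)‖ ≤ ‖x - y‖ * ‖x‖ ^ n := by
  intro n
  induction n with
  | zero => simp
  | succ n ih =>
    have hid : x ^ (n+2) - y ^ (n+2) = x * (x ^ (n+1) - y ^ (n+1)) + (x - y) * y ^ (n+1) := by
      ring
    calc ‖x ^ (n+2) - y ^ (n+2)‖
        ≤ max ‖x * (x ^ (n+1) - y ^ (n+1))‖ ‖(x - y) * y ^ (n+1)‖ := by rw [hid]; exact hna _ _
      _ ≤ ‖x - y‖ * ‖x‖ ^ (n+1) := by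
          apply max_le
          · rw [norm_mul]
            calc ‖x‖ * ‖x ^ (n+1) - y ^ (n+1)‖ ≤ ‖x‖ * (‖x - y‖ * ‖x‖ ^ n) :=
                  mul_le_mul_of_nonneg_left ih (norm_nonneg _)
              _ = ‖x - y‖ * ‖x‖ ^ (n+1) := by ring
          · rw [norm_mul, norm_pow, ← h, pow_succ]

lemma aux_zpow_sub_zpow {K : Type*} [NormedField K]
    (hna : ∀ x y : K, ‖x + y‖ ≤ max ‖x‖ ‖y‖)
    (x y : K) (hx : x ≠ 0) (hy : y ≠ 0) (h : ‖x‖ = ‖y‖) (m : ℤ) :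
    ‖x ^ m - y ^ m‖ ≤ ‖x - y‖ * ‖x‖ ^ (m - 1) := by
  have hx0 : (0:ℝ) < ‖x‖ := norm_pos_iff.mpr hx
  obtain ⟨n, rfl | rfl⟩ := m.eq_nat_or_neg
  · cases n with
    | zero =>
      have hp : (0:ℝ) ≤ ‖x - y‖ * ‖x‖ ^ ((0:ℤ) - 1) := by positivity
      simpa using hp
    | succ n =>
      have := aux_pow_sub_pow hna x y h n
      rw [zpow_natCast, zpow_natCast, show ((((n+1):ℕ):ℤ) - 1) = ((n:ℕ):ℤ) by push_cast; ring,
        zpow_natCast]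
      exact this
  · cases n with
    | zero =>
      have hp : (0:ℝ) ≤ ‖x - y‖ * ‖x‖ ^ (-((0:ℕ):ℤ) - 1) := by positivity
      simpa using hp
    | succ n =>
      have hid : x ^ (-(((n+1):ℕ):ℤ)) - y ^ (-(((n+1):ℕ):ℤ))
          = (y ^ (n+1) - x ^ (n+1)) * ((x ^ (n+1))⁻¹ * (y ^ (n+1))⁻¹) := by
        have hxp : x ^ (n+1) ≠ 0 := pow_ne_zero _ hx
        have hyp : y ^ (n+1) ≠ 0 := pow_ne_zero _ hy
        rw [zpow_neg, zpow_neg, zpow_natCast, zpow_natCast]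
        field_simp
      have h1 : ‖y ^ (n+1) - x ^ (n+1)‖ ≤ ‖x - y‖ * ‖x‖ ^ n := by
        rw [norm_sub_rev]
        exact aux_pow_sub_pow hna x y h n
      have key : ‖x‖ ^ (-(((n+1):ℕ):ℤ) - 1) = ‖x‖ ^ n * (‖x‖ ^ (n+1))⁻¹ * (‖x‖ ^ (n+1))⁻¹ := by
        rw [show (-(((n+1):ℕ):ℤ) - 1) = ((n:ℕ):ℤ) + (-(((n+1):ℕ):ℤ)) + (-(((n+1):ℕ):ℤ)) by
          push_cast; ring, zpow_add₀ hx0.ne', zpow_add₀ hx0.ne', zpow_neg, zpow_natCast,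
          zpow_natCast]
      rw [hid, norm_mul, norm_mul, norm_inv, norm_inv, norm_pow, norm_pow, key, ← h]
      calc ‖y ^ (n+1) - x ^ (n+1)‖ * ((‖x‖ ^ (n+1))⁻¹ * (‖x‖ ^ (n+1))⁻¹)
          ≤ (‖x - y‖ * ‖x‖ ^ n) * ((‖x‖ ^ (n+1))⁻¹ * (‖x‖ ^ (n+1))⁻¹) := by
            apply mul_le_mul_of_nonneg_right h1
            positivity
        _ = ‖x - y‖ * (‖x‖ ^ n * (‖x‖ ^ (n+1))⁻¹ * (‖x‖ ^ (n+1))⁻¹) := by ring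

lemma aux_padic_inv_norm {p : ℕ} [Fact p.Prime] (n : ℕ) (hn : 0 < n) :
    ‖((n : ℚ_[p]))⁻¹‖ ≤ (p : ℝ) ^ ((Nat.log p n : ℕ) : ℝ) := by
  have hp1 : (1:ℝ) < p := by exact_mod_cast (Fact.out : p.Prime).one_lt
  have hne : (n : ℚ_[p]) ≠ 0 := Nat.cast_ne_zero.mpr hn.ne'
  rw [norm_inv, Padic.norm_eq_zpow_neg_valuation hne, Padic.valuation_natCast, ← zpow_neg, neg_neg,
    ← Real.rpow_intCast]
  apply Real.rpow_le_rpow_of_exponent_le hp1.le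
  have := padicValNat_le_nat_log (p := p) n
  exact_mod_cast this

set_option maxHeartbeats 2000000 in
/-- Precision bound for tiny Coleman integrals (Proposition 3.1 of
Balakrishnan–Tuitman, "Explicit Coleman integration for curves").
The true integral `Σ_{i ≥ -k, i ≠ -1} (a_i/(i+1))(s'^{i+1} - s^{i+1})` converges, and
differs from the computed integral (with coefficients `aa` accurate to precision `N` and
truncated modulo `t^l`, and endpoints `s̃, s̃'` accurate to precision `N`) by at most
`max(p^{-ν₁}, p^{-ν₂}, p^{-ν₃})`. Here the terms with `i < -k` and `i = -1` vanish
because `a` and `aa` vanish there. -/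
theorem tiny_integral_precision {p : ℕ} [Fact p.Prime] {K : Type*} [NormedField K]
    [CompleteSpace K] [Algebra ℚ_[p] K]
    (hna : ∀ x y : K, ‖x + y‖ ≤ max ‖x‖ ‖y‖)
    (hiso : ∀ a : ℚ_[p], ‖algebraMap ℚ_[p] K a‖ = ‖a‖)
    (e k l : ℕ) (he : 0 < e) (hk : 2 ≤ k) (hl : 0 < l) (N : ℝ) (hN : 0 < N)
    (a aa : ℤ → ℚ_[p])
    (ha1 : ∀ i : ℤ, ‖a i‖ ≤ 1)
    (ha0 : ∀ i : ℤ, i < -(k : ℤ) → a i = 0)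
    (ham1 : a (-1) = 0)
    (haa : ∀ i : ℤ, ‖a i - aa i‖ ≤ (p : ℝ) ^ (-N))
    (haa0 : ∀ i : ℤ, i < -(k : ℤ) → aa i = 0)
    (haal : ∀ i : ℤ, (l : ℤ) ≤ i → aa i = 0)
    (haam1 : aa (-1) = 0)
    (s s' t t' : K) (hs : s ≠ 0) (hs' : s' ≠ 0) (ht : t ≠ 0) (ht' : t' ≠ 0)
    (hsn : ‖s‖ ≤ (p : ℝ) ^ (-(1 : ℝ) / e)) (hs'n : ‖s'‖ ≤ (p : ℝ) ^ (-(1 : ℝ) / e))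
    (htn : ‖t‖ ≤ (p : ℝ) ^ (-(1 : ℝ) / e)) (ht'n : ‖t'‖ ≤ (p : ℝ) ^ (-(1 : ℝ) / e))
    (hst : ‖s - t‖ ≤ (p : ℝ) ^ (-N)) (hs't' : ‖s' - t'‖ ≤ (p : ℝ) ^ (-N))
    (hts : ‖t‖ = ‖s‖) (ht's' : ‖t'‖ = ‖s'‖)
    (μ : ℝ) (hμ : μ = max (-(Real.logb p ‖s‖)) (-(Real.logb p ‖s'‖))) :
    Summable (fun i : ℤ =>
      algebraMap ℚ_[p] K (a i / ((i : ℚ_[p]) + 1)) * (s' ^ (i + 1) - s ^ (i + 1))) ∧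
    ∀ ν₁ ν₂ ν₃ : ℝ,
      (∀ i : ℕ, l ≤ i → ν₁ ≤ ((i : ℝ) + 1) / e - (Nat.log p (i + 1) : ℝ)) →
      (∀ i : ℕ, i ≤ l - 1 → ν₂ ≤ N + (i : ℝ) / e - (Nat.log p (i + 1) : ℝ)) →
      ν₃ ≤ N - (k : ℝ) * μ - (Nat.log p (k - 1) : ℝ) →
      ‖(∑' i : ℤ,
            algebraMap ℚ_[p] K (a i / ((i : ℚ_[p]) + 1)) * (s' ^ (i + 1) - s ^ (i + 1))) -
          ∑ i ∈ Finset.Icc (-(k : ℤ)) ((l : ℤ) - 1),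
            algebraMap ℚ_[p] K (aa i / ((i : ℚ_[p]) + 1)) * (t' ^ (i + 1) - t ^ (i + 1))‖ ≤
        max (max ((p : ℝ) ^ (-ν₁)) ((p : ℝ) ^ (-ν₂))) ((p : ℝ) ^ (-ν₃)) := by
  have hp1 : (1:ℝ) < p := by exact_mod_cast (Fact.out : p.Prime).one_lt
  have hp0 : (0:ℝ) < p := lt_trans zero_lt_one hp1
  set F : ℤ → K := fun i =>
    algebraMap ℚ_[p] K (a i / ((i : ℚ_[p]) + 1)) * (s' ^ (i + 1) - s ^ (i + 1)) with hF
  set G : ℤ → K := fun i =>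
    algebraMap ℚ_[p] K (aa i / ((i : ℚ_[p]) + 1)) * (t' ^ (i + 1) - t ^ (i + 1)) with hG
  have hsub : ∀ x y : K, ‖x - y‖ ≤ max ‖x‖ ‖y‖ := fun x y => by
    simpa [sub_eq_add_neg] using hna x (-y)
  have hsubQ : ∀ x y : ℚ_[p], ‖x - y‖ ≤ max ‖x‖ ‖y‖ := fun x y => by
    simpa [sub_eq_add_neg] using Padic.nonarchimedean x (-y)
  -- rpow toolkit
  have rmono : ∀ {x y : ℝ}, x ≤ y → (p:ℝ)^x ≤ (p:ℝ)^y := fun hxy =>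
    Real.rpow_le_rpow_of_exponent_le hp1.le hxy
  have rpos : ∀ x : ℝ, (0:ℝ) < (p:ℝ)^x := fun x => Real.rpow_pos_of_pos hp0 x
  have hzr : ∀ (c : ℝ) (m : ℤ), ((p:ℝ) ^ c) ^ m = (p:ℝ) ^ (c * (m:ℝ)) := fun c m => by
    rw [← Real.rpow_intCast ((p:ℝ)^c) m, ← Real.rpow_mul hp0.le]
  -- logarithmic exponents of the endpoints
  set lam : ℝ := -Real.logb p ‖s‖ with hlam
  set lam' : ℝ := -Real.logb p ‖s'‖ with hlam'
  have hsnorm0 : (0:ℝ) < ‖s‖ := norm_pos_iff.mpr hs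
  have hs'norm0 : (0:ℝ) < ‖s'‖ := norm_pos_iff.mpr hs'
  have hslog : ‖s‖ = (p:ℝ) ^ (-lam) := by
    rw [hlam, neg_neg, Real.rpow_logb hp0 hp1.ne' hsnorm0]
  have hs'log : ‖s'‖ = (p:ℝ) ^ (-lam') := by
    rw [hlam', neg_neg, Real.rpow_logb hp0 hp1.ne' hs'norm0]
  have he0 : (0:ℝ) < (e:ℝ) := by exact_mod_cast he
  have hlam_ge : 1/(e:ℝ) ≤ lam := by
    have h1 : Real.logb p ‖s‖ ≤ Real.logb p ((p:ℝ) ^ (-(1:ℝ)/e)) :=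
      Real.logb_le_logb_of_le hp1 hsnorm0 hsn
    rw [Real.logb_rpow hp0 hp1.ne'] at h1
    rw [hlam]
    have : -(1:ℝ)/e = -(1/e) := by ring
    linarith [h1.trans_eq this]
  have hlam'_ge : 1/(e:ℝ) ≤ lam' := by
    have h1 : Real.logb p ‖s'‖ ≤ Real.logb p ((p:ℝ) ^ (-(1:ℝ)/e)) :=
      Real.logb_le_logb_of_le hp1 hs'norm0 hs'n
    rw [Real.logb_rpow hp0 hp1.ne'] at h1
    rw [hlam']
    have : -(1:ℝ)/e = -(1/e) := by ring
    linarith [h1.trans_eq this]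
  have hlam_pos : 0 < lam := lt_of_lt_of_le (by positivity) hlam_ge
  have hlam'_pos : 0 < lam' := lt_of_lt_of_le (by positivity) hlam'_ge
  have hlam_mu : lam ≤ μ := hμ ▸ le_max_left _ _
  have hlam'_mu : lam' ≤ μ := hμ ▸ le_max_right _ _
  have hmu_pos : 0 < μ := lt_of_lt_of_le hlam_pos hlam_mu
  have hdivlam : ∀ x : ℝ, 0 ≤ x → x/(e:ℝ) ≤ lam * x := by
    intro x hx
    calc x/(e:ℝ) = (1/(e:ℝ)) * x := by ring
      _ ≤ lam * x := mul_le_mul_of_nonneg_right hlam_ge hx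
  have hdivlam' : ∀ x : ℝ, 0 ≤ x → x/(e:ℝ) ≤ lam' * x := by
    intro x hx
    calc x/(e:ℝ) = (1/(e:ℝ)) * x := by ring
      _ ≤ lam' * x := mul_le_mul_of_nonneg_right hlam'_ge hx
  -- norms of zpowers
  have hsz : ∀ m : ℤ, ‖s ^ m‖ = (p:ℝ) ^ (-lam * (m:ℝ)) := fun m => by
    rw [norm_zpow, hslog, hzr]
  have hs'z : ∀ m : ℤ, ‖s' ^ m‖ = (p:ℝ) ^ (-lam' * (m:ℝ)) := fun m => by
    rw [norm_zpow, hs'log, hzr]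
  -- difference of zpowers
  have hdz : ∀ m : ℤ, ‖s ^ m - t ^ m‖ ≤ (p:ℝ) ^ (-N) * (p:ℝ) ^ (-lam * ((m:ℝ) - 1)) := by
    intro m
    have h1 := aux_zpow_sub_zpow hna s t hs ht hts.symm m
    have h2 : ‖s‖ ^ (m - 1) = (p:ℝ) ^ (-lam * ((m:ℝ) - 1)) := by
      rw [hslog, hzr]
      congr 1
      push_cast
      ring
    rw [h2] at h1
    exact h1.trans (mul_le_mul_of_nonneg_right hst (rpos _).le)
  have hd'z : ∀ m : ℤ, ‖s' ^ m - t' ^ m‖ ≤ (p:ℝ) ^ (-N) * (p:ℝ) ^ (-lam' * ((m:ℝ) - 1)) := by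
    intro m
    have h1 := aux_zpow_sub_zpow hna s' t' hs' ht' ht's'.symm m
    have h2 : ‖s'‖ ^ (m - 1) = (p:ℝ) ^ (-lam' * ((m:ℝ) - 1)) := by
      rw [hs'log, hzr]
      congr 1
      push_cast
      ring
    rw [h2] at h1
    exact h1.trans (mul_le_mul_of_nonneg_right hs't' (rpos _).le)
  -- coefficient bounds
  have haa1 : ∀ i : ℤ, ‖aa i‖ ≤ 1 := by
    intro i
    have hid : aa i = a i - (a i - aa i) := by ring
    rw [hid]
    refine (hsubQ _ _).trans (max_le (ha1 i) ((haa i).trans ?_))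
    exact Real.rpow_le_one_of_one_le_of_nonpos hp1.le (by linarith)
  have hdivb : ∀ (c x : ℚ_[p]) (B D : ℝ), ‖x‖ ≤ B → 0 ≤ B → ‖c⁻¹‖ ≤ (p:ℝ)^D →
      ‖x / c‖ ≤ B * (p:ℝ)^D := by
    intro c x B D hx hB hc
    rw [div_eq_mul_inv, norm_mul]
    exact mul_le_mul hx hc (norm_nonneg _) hB
  have hcoefpos : ∀ j : ℕ, ‖((((j:ℤ)):ℚ_[p]) + 1)⁻¹‖ ≤ (p:ℝ) ^ ((Nat.log p (j+1) : ℕ) : ℝ) := by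
    intro j
    have hcast : ((((j:ℤ)):ℚ_[p]) + 1) = (((j+1 : ℕ)) : ℚ_[p]) := by push_cast; ring
    rw [hcast]
    exact aux_padic_inv_norm (j+1) (Nat.succ_pos j)
  have hcoefneg : ∀ i : ℤ, -(k:ℤ) ≤ i → i ≤ -2 →
      ‖((i:ℚ_[p]) + 1)⁻¹‖ ≤ (p:ℝ) ^ ((Nat.log p (k-1) : ℕ) : ℝ) := by
    intro i hik hi2
    set n : ℕ := (-(i+1)).toNat with hn
    have hn1 : 1 ≤ n := by omega
    have hn2 : n ≤ k - 1 := by omega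
    have hcast : ((i:ℚ_[p]) + 1) = -((n : ℕ) : ℚ_[p]) := by
      have hi : (i + 1 : ℤ) = -(n : ℤ) := by omega
      have : ((i:ℚ_[p]) + 1) = (((i+1 : ℤ)) : ℚ_[p]) := by push_cast; ring
      rw [this, hi]
      push_cast
      ring
    rw [hcast, inv_neg, norm_neg]
    refine (aux_padic_inv_norm n hn1).trans (rmono ?_)
    exact_mod_cast Nat.log_mono_right hn2
  -- generic product bound
  have hmulb : ∀ (c : ℚ_[p]) (w : K) (D E : ℝ), ‖c‖ ≤ (p:ℝ)^D → ‖w‖ ≤ (p:ℝ)^E →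
      ‖algebraMap ℚ_[p] K c * w‖ ≤ (p:ℝ)^(D+E) := by
    intro c w D E hc hw
    rw [norm_mul, hiso, Real.rpow_add hp0]
    exact mul_le_mul hc hw (norm_nonneg _) (rpos _).le
  have hdiffmax : ∀ (u v : K) (E : ℝ), ‖u‖ ≤ (p:ℝ)^E → ‖v‖ ≤ (p:ℝ)^E →
      ‖u - v‖ ≤ (p:ℝ)^E := fun u v E hu hv => (hsub u v).trans (max_le hu hv)
  -- bound for a single term of F
  have hFb : ∀ (i : ℤ) (D E : ℝ), ‖((i:ℚ_[p]) + 1)⁻¹‖ ≤ (p:ℝ)^D →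
      (-lam * ((i:ℝ)+1) ≤ E) → (-lam' * ((i:ℝ)+1) ≤ E) → ‖F i‖ ≤ (p:ℝ)^(D+E) := by
    intro i D E hD hE hE'
    apply hmulb
    · calc ‖a i / ((i:ℚ_[p]) + 1)‖ ≤ 1 * (p:ℝ)^D := hdivb _ _ _ _ (ha1 i) zero_le_one hD
        _ = (p:ℝ)^D := one_mul _
    · apply hdiffmax
      · rw [hs'z (i+1)]
        apply rmono
        refine le_trans (le_of_eq ?_) hE'
        push_cast
        ring
      · rw [hsz (i+1)]
        apply rmono
        refine le_trans (le_of_eq ?_) hE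
        push_cast
        ring
  -- bound for F i - G i
  have hFGid : ∀ i : ℤ, F i - G i =
      algebraMap ℚ_[p] K ((a i - aa i) / ((i:ℚ_[p]) + 1)) * (s' ^ (i+1) - s ^ (i+1)) +
      algebraMap ℚ_[p] K (aa i / ((i:ℚ_[p]) + 1)) *
        ((s' ^ (i+1) - t' ^ (i+1)) - (s ^ (i+1) - t ^ (i+1))) := by
    intro i
    rw [hF, hG]
    simp only [map_div₀, map_sub]
    ring
  have hFGb : ∀ (i : ℤ) (D E : ℝ), ‖((i:ℚ_[p]) + 1)⁻¹‖ ≤ (p:ℝ)^D →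
      (-lam * ((i:ℝ)+1) ≤ E) → (-lam' * ((i:ℝ)+1) ≤ E) →
      (-lam * ((i:ℝ)) ≤ E) → (-lam' * ((i:ℝ)) ≤ E) →
      ‖F i - G i‖ ≤ (p:ℝ)^(D + -N + E) := by
    intro i D E hD h1 h2 h3 h4
    rw [hFGid i]
    refine (hna _ _).trans (max_le ?_ ?_)
    · have hc : ‖(a i - aa i) / ((i:ℚ_[p]) + 1)‖ ≤ (p:ℝ)^(-N) * (p:ℝ)^D :=
        hdivb _ _ _ _ (haa i) (rpos _).le hD
      rw [← Real.rpow_add hp0] at hc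
      have hw : ‖s' ^ (i+1) - s ^ (i+1)‖ ≤ (p:ℝ)^E := by
        apply hdiffmax
        · rw [hs'z (i+1)]
          apply rmono
          refine le_trans (le_of_eq ?_) h2
          push_cast; ring
        · rw [hsz (i+1)]
          apply rmono
          refine le_trans (le_of_eq ?_) h1
          push_cast; ring
      calc ‖algebraMap ℚ_[p] K ((a i - aa i) / ((i:ℚ_[p]) + 1)) * (s' ^ (i+1) - s ^ (i+1))‖
          ≤ (p:ℝ)^((-N + D) + E) := hmulb _ _ _ _ hc hw
        _ = (p:ℝ)^(D + -N + E) := by congr 1; ring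
    · have hc : ‖aa i / ((i:ℚ_[p]) + 1)‖ ≤ 1 * (p:ℝ)^D :=
        hdivb _ _ _ _ (haa1 i) zero_le_one hD
      rw [one_mul] at hc
      have hw : ‖(s' ^ (i+1) - t' ^ (i+1)) - (s ^ (i+1) - t ^ (i+1))‖ ≤ (p:ℝ)^(-N + E) := by
        apply hdiffmax
        · refine (hd'z (i+1)).trans ?_
          rw [← Real.rpow_add hp0]
          apply rmono
          have : -lam' * (((i+1 : ℤ):ℝ) - 1) = -lam' * (i:ℝ) := by push_cast; ring
          rw [this]
          linarith
        · refine (hdz (i+1)).trans ?_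
          rw [← Real.rpow_add hp0]
          apply rmono
          have : -lam * (((i+1 : ℤ):ℝ) - 1) = -lam * (i:ℝ) := by push_cast; ring
          rw [this]
          linarith
      calc ‖algebraMap ℚ_[p] K (aa i / ((i:ℚ_[p]) + 1)) *
            ((s' ^ (i+1) - t' ^ (i+1)) - (s ^ (i+1) - t ^ (i+1)))‖
          ≤ (p:ℝ)^(D + (-N + E)) := hmulb _ _ _ _ hc hw
        _ = (p:ℝ)^(D + -N + E) := by congr 1; ring
  -- vanishing terms
  have hFzero : ∀ i : ℤ, i < -(k:ℤ) → F i = 0 := by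
    intro i hi
    rw [hF]
    simp [ha0 i hi]
  have hFm1 : F (-1) = 0 := by rw [hF]; simp [ham1]
  have hGm1 : G (-1) = 0 := by rw [hG]; simp [haam1]
  -- summability
  have hsummable : Summable F := by
    apply Summable.of_norm
    apply Summable.of_nat_of_neg
    · -- positive part
      set q : ℝ := (p:ℝ) ^ (-(1:ℝ)/(e:ℝ)) with hq
      have hq0 : 0 < q := rpos _
      have hq1 : q < 1 := by
        rw [hq]
        apply Real.rpow_lt_one_of_one_lt_of_neg hp1
        rw [neg_div]
        exact neg_neg_iff_pos.mpr (by positivity)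
      have hgeo : Summable (fun j : ℕ => ((j:ℝ))^1 * q^j) :=
        summable_pow_mul_geometric_of_norm_lt_one 1
          (by rw [Real.norm_eq_abs, abs_of_pos hq0]; exact hq1)
      have hgeo1 : Summable (fun j : ℕ => (((j+1:ℕ)):ℝ)^1 * q^(j+1)) :=
        (summable_nat_add_iff 1).2 hgeo
      apply Summable.of_nonneg_of_le (fun j => norm_nonneg _) _ hgeo1
      intro j
      have hb := hFb (j:ℤ) ((Nat.log p (j+1) : ℕ) : ℝ) (-(((j:ℝ)+1)/(e:ℝ)))
        (hcoefpos j) ?_ ?_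
      · refine hb.trans ?_
        rw [Real.rpow_add hp0]
        apply mul_le_mul
        · have h2 : ((p ^ (Nat.log p (j+1)) : ℕ) : ℝ) ≤ ((j+1 : ℕ) : ℝ) := by
            exact_mod_cast Nat.pow_log_le_self p (Nat.succ_ne_zero j)
          calc ((p:ℝ)) ^ ((Nat.log p (j+1) : ℕ):ℝ) = (((p ^ (Nat.log p (j+1)) : ℕ)):ℝ) := by
                rw [Real.rpow_natCast]
                push_cast
                ring
            _ ≤ (((j+1:ℕ)):ℝ) := h2
            _ = (((j+1:ℕ)):ℝ)^1 := (pow_one _).symm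
        · rw [hq, ← Real.rpow_natCast ((p:ℝ) ^ (-(1:ℝ)/(e:ℝ))) (j+1), ← Real.rpow_mul hp0.le]
          apply le_of_eq
          congr 1
          push_cast
          ring
        · exact (rpos _).le
        · positivity
      · push_cast
        linarith [hdivlam ((j:ℝ)+1) (by positivity)]
      · push_cast
        linarith [hdivlam' ((j:ℝ)+1) (by positivity)]
    · -- negative part
      apply summable_of_ne_finset_zero (s := Finset.range (k+1))
      intro j hj
      have hj' : k + 1 ≤ j := by simpa [Finset.mem_range, not_lt] using hj
      have : (-(j:ℤ)) < -(k:ℤ) := by omega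
      rw [hFzero _ this, norm_zero]
  constructor
  · exact hsummable
  intro ν₁ ν₂ ν₃ hν₁ hν₂ hν₃
  haveI : IsUltrametricDist K :=
    IsUltrametricDist.isUltrametricDist_of_isNonarchimedean_norm hna
  set C : ℝ := max (max ((p:ℝ) ^ (-ν₁)) ((p:ℝ) ^ (-ν₂))) ((p:ℝ) ^ (-ν₃)) with hC
  have hC0 : 0 < C := lt_of_lt_of_le (rpos (-ν₃)) (le_max_right _ _)
  have hC1 : (p:ℝ) ^ (-ν₁) ≤ C := le_trans (le_max_left _ _) (le_max_left _ _)
  have hC2 : (p:ℝ) ^ (-ν₂) ≤ C := le_trans (le_max_right _ _) (le_max_left _ _)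
  have hC3 : (p:ℝ) ^ (-ν₃) ≤ C := le_max_right _ _
  have hsplit : (∑' i, F i) - ∑ i ∈ Finset.Icc (-(k:ℤ)) ((l:ℤ)-1), G i =
      (∑ i ∈ Finset.Icc (-(k:ℤ)) ((l:ℤ)-1), (F i - G i)) +
      ∑' i : ↑((Finset.Icc (-(k:ℤ)) ((l:ℤ)-1) : Finset ℤ) : Set ℤ)ᶜ, F i := by
    rw [← Summable.sum_add_tsum_compl (s := Finset.Icc (-(k:ℤ)) ((l:ℤ)-1)) hsummable,
      Finset.sum_sub_distrib]
    ring
  rw [hsplit]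
  refine (hna _ _).trans (max_le ?_ ?_)
  · -- finite sum part
    apply IsUltrametricDist.norm_sum_le_of_forall_le_of_nonneg hC0.le
    intro i hi
    rw [Finset.mem_Icc] at hi
    rcases lt_trichotomy i (-1) with hi1 | hi1 | hi1
    · -- -k ≤ i ≤ -2 : ν₃ region
      have hi2 : i ≤ -2 := by omega
      have hb := hFGb i ((Nat.log p (k-1) : ℕ) : ℝ) ((k:ℝ) * μ) (hcoefneg i hi.1 hi2) ?_ ?_ ?_ ?_
      · refine hb.trans (le_trans (rmono ?_) hC3)
        linarith [hν₃]
      all_goals {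
        have hir : (i:ℝ) ≤ 0 := by exact_mod_cast (by omega : i ≤ 0)
        have hir2 : -((k:ℝ)) ≤ (i:ℝ) := by exact_mod_cast hi.1
        first
        | (show -lam * ((i:ℝ)+1) ≤ (k:ℝ) * μ
           nlinarith [mul_le_mul hlam_mu (show -((i:ℝ)+1) ≤ (k:ℝ) by linarith)
             (show (0:ℝ) ≤ -((i:ℝ)+1) by exact_mod_cast (by omega : (0:ℤ) ≤ -(i+1)))
             hmu_pos.le])
        | (show -lam' * ((i:ℝ)+1) ≤ (k:ℝ) * μ
           nlinarith [mul_le_mul hlam'_mu (show -((i:ℝ)+1) ≤ (k:ℝ) by linarith)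
             (show (0:ℝ) ≤ -((i:ℝ)+1) by exact_mod_cast (by omega : (0:ℤ) ≤ -(i+1)))
             hmu_pos.le])
        | (show -lam * ((i:ℝ)) ≤ (k:ℝ) * μ
           nlinarith [mul_le_mul hlam_mu (show -((i:ℝ)) ≤ (k:ℝ) by linarith)
             (show (0:ℝ) ≤ -((i:ℝ)) by linarith) hmu_pos.le])
        | (show -lam' * ((i:ℝ)) ≤ (k:ℝ) * μ
           nlinarith [mul_le_mul hlam'_mu (show -((i:ℝ)) ≤ (k:ℝ) by linarith)
             (show (0:ℝ) ≤ -((i:ℝ)) by linarith) hmu_pos.le]) }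
    · -- i = -1
      rw [hi1, hFm1, hGm1, sub_zero, norm_zero]
      exact hC0.le
    · -- 0 ≤ i ≤ l-1 : ν₂ region
      obtain ⟨j, rfl⟩ : ∃ j : ℕ, i = (j:ℤ) := ⟨i.toNat, by omega⟩
      have hjl : j ≤ l - 1 := by omega
      have hb := hFGb (j:ℤ) ((Nat.log p (j+1) : ℕ) : ℝ) (-((j:ℝ)/(e:ℝ))) (hcoefpos j) ?_ ?_ ?_ ?_
      · refine hb.trans (le_trans (rmono ?_) hC2)
        linarith [hν₂ j hjl]
      · push_cast
        nlinarith [hdivlam (j:ℝ) (Nat.cast_nonneg j), hlam_pos]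
      · push_cast
        nlinarith [hdivlam' (j:ℝ) (Nat.cast_nonneg j), hlam'_pos]
      · push_cast
        nlinarith [hdivlam (j:ℝ) (Nat.cast_nonneg j), hlam_pos]
      · push_cast
        nlinarith [hdivlam' (j:ℝ) (Nat.cast_nonneg j), hlam'_pos]
  · -- tail part
    apply IsUltrametricDist.norm_tsum_le_of_forall_le_of_nonneg hC0.le
    rintro ⟨i, hi⟩
    simp only [Set.mem_compl_iff, Finset.coe_Icc, Set.mem_Icc, not_and_or, not_le] at hi
    rcases hi with hi | hi
    · rw [hFzero i hi, norm_zero]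
      exact hC0.le
    · -- i ≥ l
      obtain ⟨j, rfl⟩ : ∃ j : ℕ, i = (j:ℤ) := ⟨i.toNat, by omega⟩
      have hjl : l ≤ j := by omega
      have hb := hFb (j:ℤ) ((Nat.log p (j+1) : ℕ) : ℝ) (-(((j:ℝ)+1)/(e:ℝ))) (hcoefpos j) ?_ ?_
      · refine hb.trans (le_trans (rmono ?_) hC1)
        linarith [hν₁ j hjl]
      · push_cast
        linarith [hdivlam ((j:ℝ)+1) (by positivity)]
      · push_cast
        linarith [hdivlam' ((j:ℝ)+1) (by positivity)]
end

section
/- Let e and l be positive integers, let a : ℕ → ℚ_p satisfy ‖a_i‖_p ≤ 1 for all i, and let t ∈ K satisfy ‖t‖ ≤ p^{-1/e}. Then the series Σ_{i ≥ l} (a_i/(i+1))·t^{i+1} converges in K, and for any real number ν such that ν ≤ (i+1)/e - ⌊log_p(i+1)⌋ for all i ≥ l, its sum has norm at most p^{-ν}. -/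
/-!
The `p`-adic valuation of `n + 1` is at most `⌊log_p (n + 1)⌋`, so dividing an integral
coefficient by `n + 1` costs at most a factor `p ^ ⌊log_p (n + 1)⌋`, while `‖t ^ (n + 1)‖` is
at most `p ^ (-(n + 1) / e)`. Each term of the tail therefore has norm at most
`p ^ (⌊log_p (n + 1)⌋ - (n + 1) / e) ≤ p ^ (-ν)`, and in a nonarchimedean field the norm of a
convergent sum is bounded by a uniform bound on its terms. Convergence itself follows by
comparison with `Σ (n + 1) ‖t‖ ^ (n + 1)`.
-/

namespace Padic

variable {p : ℕ} [Fact p.Prime]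

lemma norm_natCast_inv_le_pow_log {n : ℕ} (hn : n ≠ 0) :
    ‖(n : ℚ_[p])⁻¹‖ ≤ (p : ℝ) ^ Nat.log p n := by
  have hp : (1 : ℝ) ≤ p := mod_cast (Fact.out : p.Prime).one_le
  rw [norm_inv, norm_eq_zpow_neg_valuation (Nat.cast_ne_zero.2 hn), valuation_natCast,
    ← zpow_neg, neg_neg, zpow_natCast]
  exact pow_le_pow_right₀ hp (padicValNat_le_nat_log n)

lemma norm_div_natCast_succ_le {c : ℚ_[p]} (hc : ‖c‖ ≤ 1) (n : ℕ) :
    ‖c / ((n : ℚ_[p]) + 1)‖ ≤ (p : ℝ) ^ Nat.log p (n + 1) := by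
  rw [div_eq_mul_inv, norm_mul, ← Nat.cast_succ]
  exact (mul_le_of_le_one_left (norm_nonneg _) hc).trans
    (norm_natCast_inv_le_pow_log n.succ_ne_zero)

end Padic

section TinyIntegral

variable {p : ℕ} [Fact p.Prime] {K : Type*} [NormedField K] [Algebra ℚ_[p] K]

noncomputable def integralTerm (a : ℕ → ℚ_[p]) (t : K) (n : ℕ) : K :=
  algebraMap ℚ_[p] K (a n / ((n : ℚ_[p]) + 1)) * t ^ (n + 1)

variable {a : ℕ → ℚ_[p]} {t : K} {n : ℕ}

lemma norm_integralTerm_le_pow_log_mul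
    (hiso : ∀ c : ℚ_[p], ‖algebraMap ℚ_[p] K c‖ = ‖c‖) (ha : ‖a n‖ ≤ 1) :
    ‖integralTerm a t n‖ ≤ (p : ℝ) ^ Nat.log p (n + 1) * ‖t‖ ^ (n + 1) := by
  rw [integralTerm, norm_mul, norm_pow, hiso]
  gcongr
  exact Padic.norm_div_natCast_succ_le ha n

lemma norm_integralTerm_le_succ_mul
    (hiso : ∀ c : ℚ_[p], ‖algebraMap ℚ_[p] K c‖ = ‖c‖) (ha : ‖a n‖ ≤ 1) :
    ‖integralTerm a t n‖ ≤ (n + 1) * ‖t‖ ^ (n + 1) := by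
  refine (norm_integralTerm_le_pow_log_mul hiso ha).trans ?_
  gcongr
  exact_mod_cast Nat.pow_log_le_self p n.succ_ne_zero

lemma summable_integralTerm [CompleteSpace K]
    (hiso : ∀ c : ℚ_[p], ‖algebraMap ℚ_[p] K c‖ = ‖c‖) (ha : ∀ n, ‖a n‖ ≤ 1)
    (ht : ‖t‖ < 1) :
    Summable (integralTerm a t) := by
  have hgeom : Summable fun n : ℕ => (n : ℝ) * ‖t‖ ^ n := by
    simpa using summable_pow_mul_geometric_of_norm_lt_one 1 (by rwa [norm_norm] : ‖‖t‖‖ < 1)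
  refine .of_norm_bounded ((summable_nat_add_iff 1).2 hgeom) fun n => ?_
  exact_mod_cast norm_integralTerm_le_succ_mul hiso (ha n)

lemma norm_integralTerm_le_rpow {e : ℝ}
    (hiso : ∀ c : ℚ_[p], ‖algebraMap ℚ_[p] K c‖ = ‖c‖) (ha : ‖a n‖ ≤ 1)
    (ht : ‖t‖ ≤ (p : ℝ) ^ (-1 / e)) :
    ‖integralTerm a t n‖ ≤ (p : ℝ) ^ ((Nat.log p (n + 1) : ℝ) - (n + 1) / e) := by
  have hp : (0 : ℝ) < p := mod_cast (Fact.out : p.Prime).pos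
  have htpow : ‖t‖ ^ (n + 1) ≤ (p : ℝ) ^ (-((n + 1) / e)) := by
    calc ‖t‖ ^ (n + 1) ≤ ((p : ℝ) ^ (-1 / e)) ^ (n + 1) := by gcongr
      _ = (p : ℝ) ^ (-((n + 1) / e)) := by
        rw [← Real.rpow_natCast, ← Real.rpow_mul hp.le]
        push_cast
        ring_nf
  calc ‖integralTerm a t n‖ ≤ (p : ℝ) ^ Nat.log p (n + 1) * ‖t‖ ^ (n + 1) :=
        norm_integralTerm_le_pow_log_mul hiso ha
    _ ≤ (p : ℝ) ^ (Nat.log p (n + 1) : ℝ) * (p : ℝ) ^ (-((n + 1) / e)) := by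
        rw [Real.rpow_natCast]
        gcongr
    _ = (p : ℝ) ^ ((Nat.log p (n + 1) : ℝ) - (n + 1) / e) := by
        rw [← Real.rpow_add hp, sub_eq_add_neg]

end TinyIntegral

theorem tiny_integral_truncation_bound_general {p : ℕ} [Fact p.Prime] {K : Type*} [NormedField K]
    [CompleteSpace K] [Algebra ℚ_[p] K]
    (hna : ∀ x y : K, ‖x + y‖ ≤ max ‖x‖ ‖y‖)
    (hiso : ∀ a : ℚ_[p], ‖algebraMap ℚ_[p] K a‖ = ‖a‖)
    (e l : ℕ) (he : 0 < e)
    (a : ℕ → ℚ_[p]) (ha : ∀ i, ‖a i‖ ≤ 1)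
    (t : K) (ht : ‖t‖ ≤ (p : ℝ) ^ (-(1 : ℝ) / e)) :
    Summable (fun i : ℕ =>
      algebraMap ℚ_[p] K (a (i + l) / (((i + l : ℕ) : ℚ_[p]) + 1)) * t ^ (i + l + 1)) ∧
    ∀ ν : ℝ,
      (∀ i : ℕ, l ≤ i → ν ≤ ((i : ℝ) + 1) / e - (Nat.log p (i + 1) : ℝ)) →
      ‖∑' i : ℕ,
          algebraMap ℚ_[p] K (a (i + l) / (((i + l : ℕ) : ℚ_[p]) + 1)) * t ^ (i + l + 1)‖ ≤
        (p : ℝ) ^ (-ν) := by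
  change Summable (fun i => integralTerm a t (i + l)) ∧
    ∀ ν : ℝ, _ → ‖∑' i, integralTerm a t (i + l)‖ ≤ _
  have hp : (1 : ℝ) < p := mod_cast (Fact.out : p.Prime).one_lt
  have ht1 : ‖t‖ < 1 := ht.trans_lt <| Real.rpow_lt_one_of_one_lt_of_neg hp <|
    div_neg_of_neg_of_pos (by norm_num) (by exact_mod_cast he)
  refine ⟨(summable_nat_add_iff l).2 (summable_integralTerm hiso ha ht1), fun ν hν => ?_⟩
  have : IsUltrametricDist K := .isUltrametricDist_of_forall_norm_add_le_max_norm hna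
  refine IsUltrametricDist.norm_tsum_le_of_forall_le_of_nonneg (by positivity) fun i => ?_
  refine (norm_integralTerm_le_rpow hiso (ha _) ht).trans <|
    Real.rpow_le_rpow_of_exponent_le hp.le ?_
  have := hν (i + l) (Nat.le_add_left l i)
  push_cast at this ⊢
  linarith

/-- The tail `Σ_{i ≥ l} (a_i/(i+1)) t^{i+1}` of the termwise antiderivative of a
`p`-adically integral power series converges for `‖t‖ ≤ p^{-1/e}`, and its sum has
norm at most `p^{-ν}` whenever `ν ≤ (i+1)/e - ⌊log_p(i+1)⌋` for all `i ≥ l`. -/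
theorem tiny_integral_truncation_bound {p : ℕ} [Fact p.Prime] {K : Type*} [NormedField K]
    [CompleteSpace K] [Algebra ℚ_[p] K]
    (hna : ∀ x y : K, ‖x + y‖ ≤ max ‖x‖ ‖y‖)
    (hiso : ∀ a : ℚ_[p], ‖algebraMap ℚ_[p] K a‖ = ‖a‖)
    (e l : ℕ) (he : 0 < e) (hl : 0 < l)
    (a : ℕ → ℚ_[p]) (ha : ∀ i, ‖a i‖ ≤ 1)
    (t : K) (ht : ‖t‖ ≤ (p : ℝ) ^ (-(1 : ℝ) / e)) :
    Summable (fun i : ℕ =>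
      algebraMap ℚ_[p] K (a (i + l) / (((i + l : ℕ) : ℚ_[p]) + 1)) * t ^ (i + l + 1)) ∧
    ∀ ν : ℝ,
      (∀ i : ℕ, l ≤ i → ν ≤ ((i : ℝ) + 1) / e - (Nat.log p (i + 1) : ℝ)) →
      ‖∑' i : ℕ,
          algebraMap ℚ_[p] K (a (i + l) / (((i + l : ℕ) : ℚ_[p]) + 1)) * t ^ (i + l + 1)‖ ≤
        (p : ℝ) ^ (-ν) :=
  tiny_integral_truncation_bound_general hna hiso e l he a ha t ht
end

section
/- Let e and l be positive integers and N a positive real number. Let a_0, …, a_{l-1} ∈ ℚ_p satisfy ‖a_i‖_p ≤ 1, and let s, s' ∈ K satisfy ‖s‖ ≤ p^{-1/e}, ‖s'‖ ≤ p^{-1/e} and ‖s - s'‖ ≤ p^{-N}. Then ‖ Σ_{i=0}^{l-1} (a_i/(i+1))·(s^{i+1} - s'^{i+1}) ‖ ≤ max_{0 ≤ i ≤ l-1} p^{-(N + i/e - ⌊log_p(i+1)⌋)}. -/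
/-!
Expand each term: `s^{i+1} - s'^{i+1} = (s - s') · Σ_j s^j s'^{i-j}`, and in an ultrametric ring
every summand `s^j s'^{i-j}` has norm at most `p^{-i/e}`, so the difference has norm at most
`p^{-i/e - N}`. The coefficient `a_i/(i+1)` has norm at most `p^{v_p(i+1)} ≤ p^{⌊log_p(i+1)⌋}`.
The ultrametric inequality then bounds the whole sum by the largest of the termwise bounds.
-/

theorem Padic.norm_natCast_inv_le_pow_log_s2 {p : ℕ} [Fact p.Prime] {n : ℕ} (hn : n ≠ 0) :
    ‖(n : ℚ_[p])⁻¹‖ ≤ (p : ℝ) ^ Nat.log p n := by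
  have hp : (1 : ℝ) ≤ p := by exact_mod_cast (Fact.out : p.Prime).one_lt.le
  rw [norm_inv, Padic.norm_eq_zpow_neg_valuation (Nat.cast_ne_zero.mpr hn),
    Padic.valuation_natCast, zpow_neg, inv_inv, zpow_natCast]
  exact pow_le_pow_right₀ hp (padicValNat_le_nat_log n)

theorem Padic.norm_div_natCast_le_pow_log {p : ℕ} [Fact p.Prime] {a : ℚ_[p]} (ha : ‖a‖ ≤ 1)
    {n : ℕ} (hn : n ≠ 0) : ‖a / n‖ ≤ (p : ℝ) ^ Nat.log p n := by
  rw [div_eq_mul_inv, norm_mul]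
  calc ‖a‖ * ‖(n : ℚ_[p])⁻¹‖ ≤ 1 * (p : ℝ) ^ Nat.log p n := by
        gcongr
        exact Padic.norm_natCast_inv_le_pow_log_s2 hn
    _ = (p : ℝ) ^ Nat.log p n := one_mul _

theorem norm_pow_succ_sub_pow_succ_le {R : Type*} [NormedCommRing R] [NormOneClass R]
    [IsUltrametricDist R] {x y : R} {r : ℝ} (hx : ‖x‖ ≤ r) (hy : ‖y‖ ≤ r) (n : ℕ) :
    ‖x ^ (n + 1) - y ^ (n + 1)‖ ≤ r ^ n * ‖x - y‖ := by
  have hr : 0 ≤ r := (norm_nonneg x).trans hx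
  have hsum : ‖∑ j ∈ Finset.range (n + 1), x ^ j * y ^ (n + 1 - 1 - j)‖ ≤ r ^ n := by
    refine IsUltrametricDist.norm_sum_le_of_forall_le_of_nonneg (pow_nonneg hr n) fun j hj => ?_
    have hjn : j ≤ n := Nat.lt_succ_iff.mp (Finset.mem_range.mp hj)
    calc ‖x ^ j * y ^ (n + 1 - 1 - j)‖ ≤ ‖x‖ ^ j * ‖y‖ ^ (n - j) :=
          (norm_mul_le _ _).trans (mul_le_mul (norm_pow_le x j) (norm_pow_le y _)
            (norm_nonneg _) (by positivity))
      _ ≤ r ^ j * r ^ (n - j) := by gcongr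
      _ = r ^ n := by rw [← pow_add, Nat.add_sub_cancel' hjn]
  rw [← geom_sum₂_mul]
  exact (norm_mul_le _ _).trans (mul_le_mul_of_nonneg_right hsum (norm_nonneg _))

theorem tiny_integral_endpoint_precision_general {p : ℕ} [Fact p.Prime] {K : Type*} [NormedField K]
    [Algebra ℚ_[p] K]
    (hna : ∀ x y : K, ‖x + y‖ ≤ max ‖x‖ ‖y‖)
    (hiso : ∀ a : ℚ_[p], ‖algebraMap ℚ_[p] K a‖ = ‖a‖)
    (e l : ℕ) (hl : 0 < l) (N : ℝ)
    (a : ℕ → ℚ_[p]) (ha : ∀ i, i < l → ‖a i‖ ≤ 1)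
    (s s' : K)
    (hs : ‖s‖ ≤ (p : ℝ) ^ (-(1 : ℝ) / e)) (hs' : ‖s'‖ ≤ (p : ℝ) ^ (-(1 : ℝ) / e))
    (hss' : ‖s - s'‖ ≤ (p : ℝ) ^ (-N)) :
    ‖∑ i ∈ Finset.range l,
        algebraMap ℚ_[p] K (a i / ((i : ℚ_[p]) + 1)) * (s ^ (i + 1) - s' ^ (i + 1))‖ ≤
      (Finset.range l).sup' (Finset.nonempty_range_iff.mpr hl.ne')
        (fun i => (p : ℝ) ^ (-(N + (i : ℝ) / e - (Nat.log p (i + 1) : ℝ)))) := by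
  have := IsUltrametricDist.isUltrametricDist_of_forall_norm_add_le_max_norm hna
  have hp : (0 : ℝ) < p := by exact_mod_cast (Fact.out : p.Prime).pos
  refine ((Finset.nonempty_range_iff.mpr hl.ne').norm_sum_le_sup'_norm _).trans
    (Finset.sup'_mono_fun fun i hi => ?_)
  have hcoeff : ‖a i / ((i : ℚ_[p]) + 1)‖ ≤ (p : ℝ) ^ Nat.log p (i + 1) := by
    rw [← Nat.cast_succ]
    exact Padic.norm_div_natCast_le_pow_log (ha i (Finset.mem_range.mp hi)) i.succ_ne_zero
  calc ‖algebraMap ℚ_[p] K (a i / ((i : ℚ_[p]) + 1)) * (s ^ (i + 1) - s' ^ (i + 1))‖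
      = ‖a i / ((i : ℚ_[p]) + 1)‖ * ‖s ^ (i + 1) - s' ^ (i + 1)‖ := by rw [norm_mul, hiso]
    _ ≤ (p : ℝ) ^ Nat.log p (i + 1) * (((p : ℝ) ^ (-(1 : ℝ) / e)) ^ i * (p : ℝ) ^ (-N)) := by
      gcongr
      exact (norm_pow_succ_sub_pow_succ_le hs hs' i).trans (by gcongr)
    _ = (p : ℝ) ^ (-(N + (i : ℝ) / e - (Nat.log p (i + 1) : ℝ))) := by
      rw [← Real.rpow_natCast, ← Real.rpow_natCast _ i, ← Real.rpow_mul hp.le,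
        ← Real.rpow_add hp, ← Real.rpow_add hp]
      ring_nf

/-- Precision bound for the nonnegative-degree part of a tiny Coleman integral: if the
endpoints `s, s'` agree to precision `N` and lie in the disk `‖·‖ ≤ p^{-1/e}`, then
`Σ_{i<l} (a_i/(i+1))(s^{i+1} - s'^{i+1})` is bounded by
`max_{0 ≤ i ≤ l-1} p^{-(N + i/e - ⌊log_p(i+1)⌋)}`. -/
theorem tiny_integral_endpoint_precision {p : ℕ} [Fact p.Prime] {K : Type*} [NormedField K]
    [CompleteSpace K] [Algebra ℚ_[p] K]
    (hna : ∀ x y : K, ‖x + y‖ ≤ max ‖x‖ ‖y‖)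
    (hiso : ∀ a : ℚ_[p], ‖algebraMap ℚ_[p] K a‖ = ‖a‖)
    (e l : ℕ) (he : 0 < e) (hl : 0 < l) (N : ℝ) (hN : 0 < N)
    (a : ℕ → ℚ_[p]) (ha : ∀ i, i < l → ‖a i‖ ≤ 1)
    (s s' : K)
    (hs : ‖s‖ ≤ (p : ℝ) ^ (-(1 : ℝ) / e)) (hs' : ‖s'‖ ≤ (p : ℝ) ^ (-(1 : ℝ) / e))
    (hss' : ‖s - s'‖ ≤ (p : ℝ) ^ (-N)) :
    ‖∑ i ∈ Finset.range l,
        algebraMap ℚ_[p] K (a i / ((i : ℚ_[p]) + 1)) * (s ^ (i + 1) - s' ^ (i + 1))‖ ≤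
      (Finset.range l).sup' (Finset.nonempty_range_iff.mpr hl.ne')
        (fun i => (p : ℝ) ^ (-(N + (i : ℝ) / e - (Nat.log p (i + 1) : ℝ)))) :=
  tiny_integral_endpoint_precision_general hna hiso e l hl N a ha s s' hs hs' hss'
end

section
/- Let k ≥ 2 be an integer, N and μ positive real numbers, and let a_{-k}, …, a_{-2} ∈ ℚ_p satisfy ‖a_i‖_p ≤ 1 for -k ≤ i ≤ -2. Let s, s' ∈ K be nonzero with ‖s‖ = ‖s'‖ = p^{-μ} and ‖s - s'‖ ≤ p^{-N}. Then ‖ Σ_{i=-k}^{-2} (a_i/(i+1))·(s^{i+1} - s'^{i+1}) ‖ ≤ p^{-(N - kμ - ⌊log_p(k-1)⌋)}. -/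
open Finset

private lemma norm_sum_le_of_nonarch {K : Type*} [NormedField K]
    (hna : ∀ x y : K, ‖x + y‖ ≤ max ‖x‖ ‖y‖) {α : Type*} (S : Finset α) (f : α → K)
    {C : ℝ} (hC : 0 ≤ C) (h : ∀ i ∈ S, ‖f i‖ ≤ C) : ‖∑ i ∈ S, f i‖ ≤ C := by
  classical
  induction S using Finset.induction_on with
  | empty => simpa
  | @insert b T hx ih =>
    rw [Finset.sum_insert hx]
    exact le_trans (hna _ _) (max_le (h b (mem_insert_self _ _))
      (ih fun i hi => h i (mem_insert_of_mem hi)))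

/-- Precision bound for the pole (negative-degree) part of a tiny Coleman integral of a
1-form of the second kind: if the endpoints `s, s'` are nonzero of common norm `p^{-μ}`
and agree to precision `N`, then `Σ_{i=-k}^{-2} (a_i/(i+1))(s^{i+1} - s'^{i+1})` has norm
at most `p^{-(N - kμ - ⌊log_p(k-1)⌋)}`. -/
theorem tiny_integral_pole_precision {p : ℕ} [Fact p.Prime] {K : Type*} [NormedField K]
    [CompleteSpace K] [Algebra ℚ_[p] K]
    (hna : ∀ x y : K, ‖x + y‖ ≤ max ‖x‖ ‖y‖)
    (hiso : ∀ a : ℚ_[p], ‖algebraMap ℚ_[p] K a‖ = ‖a‖)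
    (k : ℕ) (hk : 2 ≤ k) (N μ : ℝ) (hN : 0 < N) (hμ : 0 < μ)
    (a : ℤ → ℚ_[p]) (ha : ∀ i : ℤ, -(k : ℤ) ≤ i → i ≤ -2 → ‖a i‖ ≤ 1)
    (s s' : K) (hs : s ≠ 0) (hs' : s' ≠ 0)
    (hsn : ‖s‖ = (p : ℝ) ^ (-μ)) (hs'n : ‖s'‖ = (p : ℝ) ^ (-μ))
    (hss' : ‖s - s'‖ ≤ (p : ℝ) ^ (-N)) :
    ‖∑ i ∈ Finset.Icc (-(k : ℤ)) (-2),
        algebraMap ℚ_[p] K (a i / ((i : ℚ_[p]) + 1)) * (s ^ (i + 1) - s' ^ (i + 1))‖ ≤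
      (p : ℝ) ^ (-(N - (k : ℝ) * μ - (Nat.log p (k - 1) : ℝ))) := by
  have hp : p.Prime := Fact.out
  have hp1 : (1 : ℝ) < p := by exact_mod_cast hp.one_lt
  have hp0 : (0 : ℝ) < p := lt_trans one_pos hp1
  set L : ℕ := Nat.log p (k - 1) with hL
  -- bound on differences of positive powers
  have hpow : ∀ j : ℕ, ‖s ^ (j + 1) - s' ^ (j + 1)‖ ≤ (p : ℝ) ^ (-N) * ((p : ℝ) ^ (-μ)) ^ j := by
    intro j
    induction j with
    | zero => simpa using hss'
    | succ j ih =>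
      have key : s ^ (j + 1 + 1) - s' ^ (j + 1 + 1)
          = s * (s ^ (j + 1) - s' ^ (j + 1)) + (s - s') * s' ^ (j + 1) := by ring
      rw [key]
      refine le_trans (hna _ _) (max_le ?_ ?_)
      · rw [norm_mul, hsn]
        calc (p : ℝ) ^ (-μ) * ‖s ^ (j + 1) - s' ^ (j + 1)‖
            ≤ (p : ℝ) ^ (-μ) * ((p : ℝ) ^ (-N) * ((p : ℝ) ^ (-μ)) ^ j) :=
              mul_le_mul_of_nonneg_left ih (Real.rpow_nonneg hp0.le _)
          _ = (p : ℝ) ^ (-N) * ((p : ℝ) ^ (-μ)) ^ (j + 1) := by ring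
      · rw [norm_mul, norm_pow, hs'n]
        exact mul_le_mul_of_nonneg_right hss' (pow_nonneg (Real.rpow_nonneg hp0.le _) _)
  refine norm_sum_le_of_nonarch hna _ _ (Real.rpow_nonneg hp0.le _) ?_
  intro i hi
  rw [Finset.mem_Icc] at hi
  obtain ⟨hi1, hi2⟩ := hi
  set j : ℕ := (-(i + 1)).toNat with hj
  have hjZ : (j : ℤ) = -(i + 1) := Int.toNat_of_nonneg (by omega)
  have hj1 : 1 ≤ j := by omega
  have hjk : j ≤ k - 1 := by omega
  have hjk' : (j : ℝ) + 1 ≤ (k : ℝ) := by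
    have : j + 1 ≤ k := by omega
    exact_mod_cast this
  have hj0 : j ≠ 0 := by omega
  -- norm of the coefficient
  have hc : ((i : ℚ_[p]) + 1) = -(j : ℚ_[p]) := by
    have h1 : ((i : ℤ) + 1 : ℤ) = -(j : ℤ) := by omega
    have h2 : (((i + 1 : ℤ)) : ℚ_[p]) = ((-(j : ℤ) : ℤ) : ℚ_[p]) := by rw [h1]
    push_cast at h2
    exact h2
  have hcn : ‖((i : ℚ_[p]) + 1)‖ = (p : ℝ) ^ (-(padicValNat p j : ℤ)) := by
    rw [hc, norm_neg, Padic.norm_eq_zpow_neg_valuation (by exact_mod_cast hj0),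
      Padic.valuation_natCast]
  have hval : padicValNat p j ≤ L := le_trans (padicValNat_le_nat_log j)
    (Nat.log_mono_right hjk)
  have hA : ‖a i / ((i : ℚ_[p]) + 1)‖ ≤ (p : ℝ) ^ ((L : ℕ) : ℝ) := by
    rw [norm_div, hcn]
    have h1 : ‖a i‖ ≤ 1 := ha i hi1 hi2
    have h2 : ((p : ℝ) ^ (-(padicValNat p j : ℤ)))⁻¹ = (p : ℝ) ^ ((padicValNat p j : ℤ)) := by
      rw [← zpow_neg, neg_neg]
    calc ‖a i‖ / (p : ℝ) ^ (-(padicValNat p j : ℤ))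
        ≤ 1 / (p : ℝ) ^ (-(padicValNat p j : ℤ)) := by
          gcongr
      _ = (p : ℝ) ^ ((padicValNat p j : ℤ)) := by rw [one_div, h2]
      _ ≤ (p : ℝ) ^ ((L : ℤ)) := by
          apply zpow_le_zpow_right₀ hp1.le
          exact_mod_cast hval
      _ = (p : ℝ) ^ ((L : ℕ) : ℝ) := by
          rw [← Real.rpow_intCast]
          norm_num
  -- norm of the power difference
  have hzpow : s ^ (i + 1) - s' ^ (i + 1) = (s ^ j)⁻¹ - (s' ^ j)⁻¹ := by
    have h1 : i + 1 = -(j : ℤ) := by omega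
    rw [h1, zpow_neg, zpow_neg, zpow_natCast, zpow_natCast]
  have hrw : ∀ m : ℕ, ((p : ℝ) ^ (-μ)) ^ m = (p : ℝ) ^ (-μ * (m : ℝ)) := by
    intro m
    rw [Real.rpow_mul hp0.le, Real.rpow_natCast]
  have hB : ‖s ^ (i + 1) - s' ^ (i + 1)‖ ≤ (p : ℝ) ^ (-N + ((j : ℝ) + 1) * μ) := by
    rw [hzpow, inv_sub_inv (pow_ne_zero _ hs) (pow_ne_zero _ hs'), norm_div, norm_mul,
      norm_pow, norm_pow, hsn, hs'n]
    have hd : ‖s' ^ j - s ^ j‖ ≤ (p : ℝ) ^ (-N) * ((p : ℝ) ^ (-μ)) ^ (j - 1) := by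
      rw [norm_sub_rev]
      have := hpow (j - 1)
      rwa [Nat.sub_add_cancel hj1] at this
    calc ‖s' ^ j - s ^ j‖ / (((p : ℝ) ^ (-μ)) ^ j * ((p : ℝ) ^ (-μ)) ^ j)
        ≤ ((p : ℝ) ^ (-N) * ((p : ℝ) ^ (-μ)) ^ (j - 1)) /
            (((p : ℝ) ^ (-μ)) ^ j * ((p : ℝ) ^ (-μ)) ^ j) := by
          gcongr
      _ = (p : ℝ) ^ (-N + ((j : ℝ) + 1) * μ) := by
          rw [hrw, hrw, ← Real.rpow_add hp0, ← Real.rpow_add hp0, ← Real.rpow_sub hp0]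
          congr 1
          have : ((j - 1 : ℕ) : ℝ) = (j : ℝ) - 1 := by
            rw [Nat.cast_sub hj1]; norm_num
          rw [this]; ring
  calc ‖algebraMap ℚ_[p] K (a i / ((i : ℚ_[p]) + 1)) * (s ^ (i + 1) - s' ^ (i + 1))‖
      = ‖a i / ((i : ℚ_[p]) + 1)‖ * ‖s ^ (i + 1) - s' ^ (i + 1)‖ := by
        rw [norm_mul, hiso]
    _ ≤ (p : ℝ) ^ ((L : ℕ) : ℝ) * (p : ℝ) ^ (-N + ((j : ℝ) + 1) * μ) :=
        mul_le_mul hA hB (norm_nonneg _) (Real.rpow_nonneg hp0.le _)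
    _ = (p : ℝ) ^ (((L : ℕ) : ℝ) + (-N + ((j : ℝ) + 1) * μ)) := by
        rw [← Real.rpow_add hp0]
    _ ≤ (p : ℝ) ^ (-(N - (k : ℝ) * μ - ((L : ℕ) : ℝ))) := by
        apply Real.rpow_le_rpow_of_exponent_le hp1.le
        nlinarith [hjk']
end

section
/- Let a : ℕ → ℚ_p satisfy ‖a_i‖_p ≤ 1 for all i, and let t ∈ K satisfy ‖t‖ < 1. Then the series Σ_{i ≥ 0} (a_i/(i+1))·t^{i+1}, obtained by termwise integration of the power series Σ a_i t^i, converges in K (the family of terms is summable). -/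
/-!
Since `‖(n : ℚ_[p])‖ = p ^ (-v_p(n)) ≥ 1 / n`, dividing an integral coefficient by `i + 1`
costs at most a factor `i + 1` in norm. The `i`-th term is therefore bounded by
`(i + 1) ‖t‖ ^ (i + 1)`, a summable real sequence for `‖t‖ < 1`, and completeness of `K` does
the rest.
-/

namespace Padic

variable {p : ℕ} [Fact p.Prime]

lemma inv_natCast_le_norm_natCast {n : ℕ} (hn : n ≠ 0) : (n : ℝ)⁻¹ ≤ ‖(n : ℚ_[p])‖ := by
  rw [norm_eq_zpow_neg_valuation (Nat.cast_ne_zero.2 hn), valuation_natCast, zpow_neg,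
    zpow_natCast]
  refine inv_anti₀ (pow_pos (Nat.cast_pos.2 (Fact.out : p.Prime).pos) _) ?_
  exact_mod_cast Nat.le_of_dvd (Nat.pos_of_ne_zero hn) pow_padicValNat_dvd

lemma norm_div_natCast_le {a : ℚ_[p]} (ha : ‖a‖ ≤ 1) {n : ℕ} (hn : n ≠ 0) :
    ‖a / n‖ ≤ n := by
  calc ‖a / n‖ = ‖a‖ / ‖(n : ℚ_[p])‖ := norm_div _ _
    _ ≤ 1 / ‖(n : ℚ_[p])‖ := by gcongr
    _ = ‖(n : ℚ_[p])‖⁻¹ := one_div _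
    _ ≤ n := inv_le_of_inv_le₀ (by positivity) (inv_natCast_le_norm_natCast hn)

end Padic

lemma summable_succ_mul_pow_succ {r : ℝ} (hr₀ : 0 ≤ r) (hr : r < 1) :
    Summable (fun i : ℕ => ((i : ℝ) + 1) * r ^ (i + 1)) := by
  have h : Summable (fun n : ℕ => (n : ℝ) * r ^ n) := by
    simpa using summable_pow_mul_geometric_of_norm_lt_one (R := ℝ) 1
      (by rwa [Real.norm_of_nonneg hr₀])
  simpa using (summable_nat_add_iff 1).2 h

theorem tiny_integral_summable_general {p : ℕ} [Fact p.Prime] {K : Type*} [NormedField K]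
    [CompleteSpace K] [Algebra ℚ_[p] K]
    (hiso : ∀ a : ℚ_[p], ‖algebraMap ℚ_[p] K a‖ = ‖a‖)
    (a : ℕ → ℚ_[p]) (ha : ∀ i, ‖a i‖ ≤ 1)
    (t : K) (ht : ‖t‖ < 1) :
    Summable (fun i : ℕ =>
      algebraMap ℚ_[p] K (a i / ((i : ℚ_[p]) + 1)) * t ^ (i + 1)) := by
  refine Summable.of_norm_bounded (summable_succ_mul_pow_succ (norm_nonneg t) ht) fun i => ?_
  have hcoeff : ‖a i / ((i : ℚ_[p]) + 1)‖ ≤ (i : ℝ) + 1 := by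
    exact_mod_cast Padic.norm_div_natCast_le (ha i) i.succ_ne_zero
  rw [norm_mul, hiso, norm_pow]
  gcongr

/-- Termwise integration of a `p`-adically integral power series converges on the
open residue disk `‖t‖ < 1` in a complete nonarchimedean normed `ℚ_p`-algebra `K`
with isometric structure map. -/
theorem tiny_integral_summable {p : ℕ} [Fact p.Prime] {K : Type*} [NormedField K]
    [CompleteSpace K] [Algebra ℚ_[p] K]
    (hna : ∀ x y : K, ‖x + y‖ ≤ max ‖x‖ ‖y‖)
    (hiso : ∀ a : ℚ_[p], ‖algebraMap ℚ_[p] K a‖ = ‖a‖)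
    (a : ℕ → ℚ_[p]) (ha : ∀ i, ‖a i‖ ≤ 1)
    (t : K) (ht : ‖t‖ < 1) :
    Summable (fun i : ℕ =>
      algebraMap ℚ_[p] K (a i / ((i : ℚ_[p]) + 1)) * t ^ (i + 1)) :=
  tiny_integral_summable_general hiso a ha t ht
end

section
/- Let e₀ be a positive integer, and let c : ℕ → ℚ_p be a sequence such that v_p(c_k) ≥ ⌊k/p⌋ + 1 - ⌊log_p(k·e₀)⌋ for all k ≥ 1, where v_p is the p-adic valuation. Let u ∈ K satisfy ‖u‖ < p^{1/p}. Then the series Σ_{k ≥ 1} c_k·u^k converges in K. -/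
/-!
Write `r = p^{1/p}`. Since `k/p < ⌊k/p⌋ + 1` and `p^{⌊log_p n⌋} ≤ n`, the hypothesis on `c_k` gives
`‖c_k‖ ≤ k e₀ / r^k`. Hence `‖c_k u^k‖ ≤ e₀ k ρ^k` with `ρ = ‖u‖ / r < 1`, and the series converges
absolutely, so it converges in the complete field `K`.
-/

theorem rpow_one_div_pow_le_pow_div_add_one {x : ℝ} (hx : 1 ≤ x) (p k : ℕ) :
    (x ^ ((1 : ℝ) / p)) ^ k ≤ x ^ (k / p + 1) := by
  have hexp : (1 : ℝ) / p * k ≤ ((k / p + 1 : ℕ) : ℝ) := by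
    rw [one_div_mul_eq_div, ← Nat.floor_div_eq_div (K := ℝ), Nat.cast_add_one]
    exact (Nat.lt_floor_add_one _).le
  rw [← Real.rpow_natCast, ← Real.rpow_mul (by linarith), ← Real.rpow_natCast x]
  exact Real.rpow_le_rpow_of_exponent_le hx hexp

theorem zpow_neg_div_add_one_sub_log_le {p : ℕ} (hp : 1 < p) {n : ℕ} (hn : n ≠ 0) (k : ℕ) :
    (p : ℝ) ^ (-(((k / p : ℕ) : ℤ) + 1 - (Nat.log p n : ℤ))) ≤
      n / ((p : ℝ) ^ ((1 : ℝ) / p)) ^ k := by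
  have hp₀ : (0 : ℝ) < p := by positivity
  calc (p : ℝ) ^ (-(((k / p : ℕ) : ℤ) + 1 - (Nat.log p n : ℤ)))
      = (p : ℝ) ^ Nat.log p n / (p : ℝ) ^ (k / p + 1) := by
        rw [neg_sub, zpow_sub₀ hp₀.ne']
        norm_cast
    _ ≤ n / ((p : ℝ) ^ ((1 : ℝ) / p)) ^ k :=
        div_le_div₀ n.cast_nonneg (by exact_mod_cast Nat.pow_log_le_self p hn) (by positivity)
          (rpow_one_div_pow_le_pow_div_add_one (by exact_mod_cast hp.le) p k)

theorem summable_mul_pow_of_norm_le_mul_div_pow {R : Type*} [NormedRing R] [NormOneClass R]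
    [CompleteSpace R] {a : ℕ → R} {u : R} {C r : ℝ}
    (ha : ∀ k, 1 ≤ k → ‖a k‖ ≤ C * k / r ^ k) (hu : ‖u‖ < r) :
    Summable (fun k => a k * u ^ k) := by
  have hr : 0 < r := (norm_nonneg u).trans_lt hu
  set ρ := ‖u‖ / r
  have hρ : ‖ρ‖ < 1 := by
    rw [Real.norm_of_nonneg (div_nonneg (norm_nonneg u) hr.le), div_lt_one hr]
    exact hu
  have hgeom : Summable (fun k : ℕ => C * ((k + 1 : ℕ) * ρ ^ (k + 1))) := by
    have h := (summable_nat_add_iff (f := fun k : ℕ => (k : ℝ) ^ 1 * ρ ^ k) 1).mpr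
      (summable_pow_mul_geometric_of_norm_lt_one 1 hρ)
    simp only [pow_one] at h
    exact h.mul_left C
  refine (summable_nat_add_iff (f := fun k => a k * u ^ k) 1).mp (hgeom.of_norm_bounded fun k => ?_)
  calc ‖a (k + 1) * u ^ (k + 1)‖
      ≤ ‖a (k + 1)‖ * ‖u‖ ^ (k + 1) :=
        (norm_mul_le _ _).trans (by gcongr; exact norm_pow_le u _)
    _ ≤ C * (k + 1 : ℕ) / r ^ (k + 1) * ‖u‖ ^ (k + 1) := by
        gcongr
        exact ha (k + 1) k.succ_pos
    _ = C * ((k + 1 : ℕ) * ρ ^ (k + 1)) := by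
        rw [div_pow]
        ring

theorem overconvergent_summable_general {p : ℕ} [Fact p.Prime] {K : Type*} [NormedField K]
    [CompleteSpace K] [Algebra ℚ_[p] K]
    (hiso : ∀ a : ℚ_[p], ‖algebraMap ℚ_[p] K a‖ = ‖a‖)
    (e₀ : ℕ) (he₀ : 0 < e₀)
    (c : ℕ → ℚ_[p])
    (hc : ∀ k : ℕ, 1 ≤ k →
      ‖c k‖ ≤ (p : ℝ) ^ (-(((k / p : ℕ) : ℤ) + 1 - (Nat.log p (k * e₀) : ℤ))))
    (u : K) (hu : ‖u‖ < (p : ℝ) ^ ((1 : ℝ) / p)) :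
    Summable (fun k : ℕ => algebraMap ℚ_[p] K (c (k + 1)) * u ^ (k + 1)) := by
  refine (summable_nat_add_iff (f := fun k => algebraMap ℚ_[p] K (c k) * u ^ k) 1).mpr
    (summable_mul_pow_of_norm_le_mul_div_pow (C := e₀) (fun k hk => ?_) hu)
  calc ‖algebraMap ℚ_[p] K (c k)‖ = ‖c k‖ := hiso (c k)
    _ ≤ ((k * e₀ : ℕ) : ℝ) / ((p : ℝ) ^ ((1 : ℝ) / p)) ^ k :=
        (hc k hk).trans <| zpow_neg_div_add_one_sub_log_le (Fact.out : p.Prime).one_lt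
          (Nat.mul_pos hk he₀).ne' k
    _ = e₀ * k / ((p : ℝ) ^ ((1 : ℝ) / p)) ^ k := by
        push_cast
        ring

/-- Convergence of the overconvergent functions `f_{i,0}` outside the closed disk
`v_p(r(x)) ≥ 1/p`: if `v_p(c_k) ≥ ⌊k/p⌋ + 1 - ⌊log_p(k e₀)⌋` for `k ≥ 1` (expressed via
`‖c_k‖ ≤ p^{-(⌊k/p⌋ + 1 - ⌊log_p(k e₀)⌋)}`) and `‖u‖ < p^{1/p}`, then `Σ_{k≥1} c_k u^k`
converges. -/
theorem overconvergent_summable {p : ℕ} [Fact p.Prime] {K : Type*} [NormedField K]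
    [CompleteSpace K] [Algebra ℚ_[p] K]
    (hna : ∀ x y : K, ‖x + y‖ ≤ max ‖x‖ ‖y‖)
    (hiso : ∀ a : ℚ_[p], ‖algebraMap ℚ_[p] K a‖ = ‖a‖)
    (e₀ : ℕ) (he₀ : 0 < e₀)
    (c : ℕ → ℚ_[p])
    (hc : ∀ k : ℕ, 1 ≤ k →
      ‖c k‖ ≤ (p : ℝ) ^ (-(((k / p : ℕ) : ℤ) + 1 - (Nat.log p (k * e₀) : ℤ))))
    (u : K) (hu : ‖u‖ < (p : ℝ) ^ ((1 : ℝ) / p)) :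
    Summable (fun k : ℕ => algebraMap ℚ_[p] K (c (k + 1)) * u ^ (k + 1)) :=
  overconvergent_summable_general hiso e₀ he₀ c hc u hu
end

section
/- Let e₀ be a positive integer, N a positive real number, and ε a real number with 0 ≤ ε < 1/p. Write B(k) = ⌊k/p⌋ + 1 - ⌊log_p(k·e₀)⌋. Let c, c̃ : ℕ → ℚ_p be sequences such that for all k ≥ 1: v_p(c_k) ≥ B(k), v_p(c̃_k) ≥ B(k), and ‖c_k - c̃_k‖_p ≤ p^{-N}. Let u ∈ K satisfy ‖u‖ ≤ p^{ε}. Then the series Σ_{k≥1} c_k·u^k and Σ_{k≥1} c̃_k·u^k both converge in K, and for any real number ν such that ν ≤ max(N, B(k)) - k·ε for all k ≥ 1, one has ‖ Σ_{k≥1} c_k·u^k − Σ_{k≥1} c̃_k·u^k ‖ ≤ p^{-ν}. -/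
/-!
Since `⌊k/p⌋ ≥ k/p - 1` and `p ^ ⌊log_p (k e₀)⌋ ≤ k e₀`, a coefficient of valuation at least
`B(k)` times `uᵏ` has norm at most `k e₀ rᵏ` with `r = p ^ (ε - 1/p) < 1`, so both series
converge. The ultrametric inequality gives `‖c_k - c'_k‖ ≤ p ^ (-max(N, B(k)))`, so every term of
the difference series has norm at most `p ^ (-ν)`, and hence so does its sum.
-/

open Real

namespace Overconvergent

def coeffValuationBound (p e₀ k : ℕ) : ℤ :=
  ((k / p : ℕ) : ℤ) + 1 - (Nat.log p (k * e₀) : ℤ)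

lemma rpow_neg_coeffValuationBound_le {p e₀ k : ℕ} (hp : 1 < p) (hk : k * e₀ ≠ 0) :
    (p : ℝ) ^ (-(coeffValuationBound p e₀ k : ℝ)) ≤ k * e₀ * (p : ℝ) ^ (-(k / p : ℝ)) := by
  have hp0 : (0 : ℝ) < p := by positivity
  have hfloor : (k / p : ℝ) - 1 < ((k / p : ℕ) : ℝ) := by
    simpa only [Nat.floor_div_eq_div] using Nat.sub_one_lt_floor ((k : ℝ) / p)
  have hlog : (p : ℝ) ^ (Nat.log p (k * e₀) : ℝ) ≤ k * e₀ := by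
    rw [rpow_natCast]
    exact_mod_cast Nat.pow_log_le_self p hk
  calc (p : ℝ) ^ (-(coeffValuationBound p e₀ k : ℝ))
      ≤ (p : ℝ) ^ ((Nat.log p (k * e₀) : ℝ) + -(k / p : ℝ)) := by
        apply rpow_le_rpow_of_exponent_le (by exact_mod_cast hp.le)
        simp only [coeffValuationBound, Int.cast_sub, Int.cast_add, Int.cast_natCast,
          Int.cast_one]
        linarith
    _ = (p : ℝ) ^ (Nat.log p (k * e₀) : ℝ) * (p : ℝ) ^ (-(k / p : ℝ)) := rpow_add hp0 _ _
    _ ≤ k * e₀ * (p : ℝ) ^ (-(k / p : ℝ)) := by gcongr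

lemma pow_le_rpow_natCast_mul {x b ε : ℝ} (hx : 0 ≤ x) (hb : 0 ≤ b) (h : x ≤ b ^ ε) (k : ℕ) :
    x ^ k ≤ b ^ (k * ε) := by
  rw [mul_comm, rpow_mul_natCast hb]
  exact pow_le_pow_left₀ hx h k

lemma mul_pow_le_of_le_coeffValuationBound {p e₀ k : ℕ} (hp : 1 < p) (hk : k * e₀ ≠ 0)
    {ε x y : ℝ} (hy : 0 ≤ y)
    (hxB : x ≤ (p : ℝ) ^ (-coeffValuationBound p e₀ k)) (hyε : y ≤ (p : ℝ) ^ ε) :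
    x * y ^ k ≤ k * e₀ * ((p : ℝ) ^ (ε - 1 / p)) ^ k := by
  have hp0 : (0 : ℝ) ≤ p := by positivity
  rw [← rpow_intCast, Int.cast_neg] at hxB
  calc x * y ^ k
      ≤ (k * e₀ * (p : ℝ) ^ (-(k / p : ℝ))) * (p : ℝ) ^ (k * ε) := by
        gcongr
        · exact hxB.trans (rpow_neg_coeffValuationBound_le hp hk)
        · exact pow_le_rpow_natCast_mul hy hp0 hyε k
    _ = k * e₀ * ((p : ℝ) ^ (ε - 1 / p)) ^ k := by
        rw [mul_assoc, ← rpow_add (by positivity), ← rpow_mul_natCast hp0]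
        ring_nf

lemma mul_pow_le_rpow_neg {b ε M ν x y : ℝ} {m : ℕ} (hb : 1 ≤ b) (hy : 0 ≤ y)
    (hx : x ≤ b ^ (-M)) (hyε : y ≤ b ^ ε) (hν : ν ≤ M - m * ε) :
    x * y ^ m ≤ b ^ (-ν) :=
  calc x * y ^ m ≤ b ^ (-M) * b ^ (m * ε) := by
        gcongr
        exact pow_le_rpow_natCast_mul hy (by positivity) hyε m
    _ = b ^ (-M + m * ε) := (rpow_add (by positivity) _ _).symm
    _ ≤ b ^ (-ν) := rpow_le_rpow_of_exponent_le hb (by linarith)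

lemma norm_sub_le_rpow_neg_max {E : Type*} [SeminormedAddCommGroup E] [IsUltrametricDist E]
    {b N B : ℝ} {x y : E} (hx : ‖x‖ ≤ b ^ (-B)) (hy : ‖y‖ ≤ b ^ (-B))
    (hxy : ‖x - y‖ ≤ b ^ (-N)) : ‖x - y‖ ≤ b ^ (-max N B) := by
  rcases le_total N B with h | h
  · rw [max_eq_right h, sub_eq_add_neg]
    refine (IsUltrametricDist.norm_add_le_max _ _).trans ?_
    rw [norm_neg]
    exact max_le hx hy
  · rwa [max_eq_left h]

variable {p : ℕ} [Fact p.Prime] {K : Type*} [NormedField K] [Algebra ℚ_[p] K]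

theorem summable_algebraMap_mul_pow [CompleteSpace K]
    (hiso : ∀ a : ℚ_[p], ‖algebraMap ℚ_[p] K a‖ = ‖a‖) {e₀ : ℕ} (he₀ : 0 < e₀) {ε : ℝ}
    (hε : ε < 1 / p) {d : ℕ → ℚ_[p]}
    (hd : ∀ k, 1 ≤ k → ‖d k‖ ≤ (p : ℝ) ^ (-coeffValuationBound p e₀ k))
    {u : K} (hu : ‖u‖ ≤ (p : ℝ) ^ ε) :
    Summable (fun k : ℕ => algebraMap ℚ_[p] K (d (k + 1)) * u ^ (k + 1)) := by
  have hp := (Fact.out : p.Prime).one_lt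
  set r : ℝ := (p : ℝ) ^ (ε - 1 / p)
  have hr : ‖r‖ < 1 := by
    rw [norm_of_nonneg (by positivity)]
    exact rpow_lt_one_of_one_lt_of_neg (by exact_mod_cast hp) (by linarith)
  have hgeom : Summable (fun k : ℕ => k * e₀ * r ^ k) :=
    ((summable_pow_mul_geometric_of_norm_lt_one 1 hr).mul_right (e₀ : ℝ)).congr fun k => by ring
  refine (summable_nat_add_iff (f := fun k => algebraMap ℚ_[p] K (d k) * u ^ k) 1).mpr
    (hgeom.of_norm_bounded_eventually ?_)
  filter_upwards [Filter.eventually_cofinite_ne 0] with k hk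
  rw [norm_mul, norm_pow, hiso]
  exact mul_pow_le_of_le_coeffValuationBound hp (mul_ne_zero hk he₀.ne') (norm_nonneg u)
    (hd k (Nat.one_le_iff_ne_zero.mpr hk)) hu

end Overconvergent

open Overconvergent

theorem overconvergent_evaluation_precision_general {p : ℕ} [Fact p.Prime] {K : Type*}
    [NormedField K] [CompleteSpace K] [Algebra ℚ_[p] K]
    (hna : ∀ x y : K, ‖x + y‖ ≤ max ‖x‖ ‖y‖)
    (hiso : ∀ a : ℚ_[p], ‖algebraMap ℚ_[p] K a‖ = ‖a‖)
    (e₀ : ℕ) (he₀ : 0 < e₀) (N : ℝ)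
    (ε : ℝ) (hε : ε < 1 / p)
    (B : ℕ → ℤ) (hB : ∀ k : ℕ, B k = ((k / p : ℕ) : ℤ) + 1 - (Nat.log p (k * e₀) : ℤ))
    (c c' : ℕ → ℚ_[p])
    (hc : ∀ k : ℕ, 1 ≤ k → ‖c k‖ ≤ (p : ℝ) ^ (-(B k)))
    (hc' : ∀ k : ℕ, 1 ≤ k → ‖c' k‖ ≤ (p : ℝ) ^ (-(B k)))
    (hcc' : ∀ k : ℕ, 1 ≤ k → ‖c k - c' k‖ ≤ (p : ℝ) ^ (-N))
    (u : K) (hu : ‖u‖ ≤ (p : ℝ) ^ ε) :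
    Summable (fun k : ℕ => algebraMap ℚ_[p] K (c (k + 1)) * u ^ (k + 1)) ∧
    Summable (fun k : ℕ => algebraMap ℚ_[p] K (c' (k + 1)) * u ^ (k + 1)) ∧
    ∀ ν : ℝ, (∀ k : ℕ, 1 ≤ k → ν ≤ max N ((B k : ℝ)) - (k : ℝ) * ε) →
      ‖(∑' k : ℕ, algebraMap ℚ_[p] K (c (k + 1)) * u ^ (k + 1)) -
          ∑' k : ℕ, algebraMap ℚ_[p] K (c' (k + 1)) * u ^ (k + 1)‖ ≤ (p : ℝ) ^ (-ν) := by
  obtain rfl : B = coeffValuationBound p e₀ := funext hB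
  have hp : (1 : ℝ) ≤ p := by exact_mod_cast (Fact.out : p.Prime).one_lt.le
  have : IsUltrametricDist K :=
    IsUltrametricDist.isUltrametricDist_of_forall_norm_add_le_max_norm hna
  have hs := summable_algebraMap_mul_pow hiso he₀ hε hc hu
  have hs' := summable_algebraMap_mul_pow hiso he₀ hε hc' hu
  refine ⟨hs, hs', fun ν hν => ?_⟩
  rw [← hs.tsum_sub hs']
  refine IsUltrametricDist.norm_tsum_le_of_forall_le_of_nonneg (by positivity) fun k => ?_
  have hk : 1 ≤ k + 1 := k.succ_pos
  have hcoeff := norm_sub_le_rpow_neg_max (b := p)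
    (by simpa only [← rpow_intCast, Int.cast_neg] using hc _ hk)
    (by simpa only [← rpow_intCast, Int.cast_neg] using hc' _ hk) (hcc' _ hk)
  rw [← sub_mul, ← map_sub, norm_mul, norm_pow, hiso]
  exact mul_pow_le_rpow_neg hp (norm_nonneg u) hcoeff hu (hν _ hk)

/-- Precision loss when evaluating the overconvergent functions at a finite bad point:
with `B(k) = ⌊k/p⌋ + 1 - ⌊log_p(k e₀)⌋`, coefficients `c, c'` of valuation at least `B(k)`
agreeing to precision `N`, and `‖u‖ ≤ p^ε` with `0 ≤ ε < 1/p`, both series `Σ_{k≥1} c_k u^k`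
and `Σ_{k≥1} c'_k u^k` converge and their sums differ by at most `p^{-ν}` for any
`ν ≤ max(N, B(k)) - kε` (all `k ≥ 1`). -/
theorem overconvergent_evaluation_precision {p : ℕ} [Fact p.Prime] {K : Type*}
    [NormedField K] [CompleteSpace K] [Algebra ℚ_[p] K]
    (hna : ∀ x y : K, ‖x + y‖ ≤ max ‖x‖ ‖y‖)
    (hiso : ∀ a : ℚ_[p], ‖algebraMap ℚ_[p] K a‖ = ‖a‖)
    (e₀ : ℕ) (he₀ : 0 < e₀) (N : ℝ) (hN : 0 < N)
    (ε : ℝ) (hε0 : 0 ≤ ε) (hε : ε < 1 / p)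
    (B : ℕ → ℤ) (hB : ∀ k : ℕ, B k = ((k / p : ℕ) : ℤ) + 1 - (Nat.log p (k * e₀) : ℤ))
    (c c' : ℕ → ℚ_[p])
    (hc : ∀ k : ℕ, 1 ≤ k → ‖c k‖ ≤ (p : ℝ) ^ (-(B k)))
    (hc' : ∀ k : ℕ, 1 ≤ k → ‖c' k‖ ≤ (p : ℝ) ^ (-(B k)))
    (hcc' : ∀ k : ℕ, 1 ≤ k → ‖c k - c' k‖ ≤ (p : ℝ) ^ (-N))
    (u : K) (hu : ‖u‖ ≤ (p : ℝ) ^ ε) :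
    Summable (fun k : ℕ => algebraMap ℚ_[p] K (c (k + 1)) * u ^ (k + 1)) ∧
    Summable (fun k : ℕ => algebraMap ℚ_[p] K (c' (k + 1)) * u ^ (k + 1)) ∧
    ∀ ν : ℝ, (∀ k : ℕ, 1 ≤ k → ν ≤ max N ((B k : ℝ)) - (k : ℝ) * ε) →
      ‖(∑' k : ℕ, algebraMap ℚ_[p] K (c (k + 1)) * u ^ (k + 1)) -
          ∑' k : ℕ, algebraMap ℚ_[p] K (c' (k + 1)) * u ^ (k + 1)‖ ≤ (p : ℝ) ^ (-ν) :=
  overconvergent_evaluation_precision_general hna hiso e₀ he₀ N ε hε B hB c c' hc hc' hcc' u hu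
end

section
/- Let n be a positive integer and N a real number. Let A and Ã be invertible n×n matrices over ℚ_p, all of whose entries have p-adic norm at most 1, such that ‖A_{ij} - Ã_{ij}‖_p ≤ p^{-N} for all i, j, and such that v_p(det A) = v_p(det Ã) = d. Then every entry of A⁻¹ - Ã⁻¹ has p-adic norm at most p^{2d - N}. -/
open IsUltrametricDist

lemma det_norm_le_one {p : ℕ} [Fact p.Prime] {n : ℕ} (M : Matrix (Fin n) (Fin n) ℚ_[p])
    (hM : ∀ i j, ‖M i j‖ ≤ 1) : ‖M.det‖ ≤ 1 := by
  rw [Matrix.det_apply]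
  refine norm_sum_le_of_forall_le_of_nonneg zero_le_one (fun σ _ => ?_)
  rw [Units.smul_def, zsmul_eq_mul]
  calc ‖((Equiv.Perm.sign σ : ℤ) : ℚ_[p]) * ∏ i, M (σ i) i‖
      = ‖((Equiv.Perm.sign σ : ℤ) : ℚ_[p])‖ * ‖∏ i, M (σ i) i‖ := norm_mul _ _
    _ ≤ 1 * 1 := by
        refine mul_le_mul ?_ ?_ (norm_nonneg _) zero_le_one
        · rcases Int.units_eq_one_or (Equiv.Perm.sign σ) with h | h <;> simp [h]
        · rw [norm_prod]
          exact Finset.prod_le_one (fun i _ => norm_nonneg _) (fun i _ => hM _ _)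
    _ = 1 := mul_one 1

lemma inv_entry_norm_le {p : ℕ} [Fact p.Prime] {n : ℕ}
    (A : Matrix (Fin n) (Fin n) ℚ_[p]) (hAdet : IsUnit A.det)
    (hA : ∀ i j, ‖A i j‖ ≤ 1) {d : ℤ} (hd : (A.det).valuation = d) :
    ∀ i j, ‖A⁻¹ i j‖ ≤ (p : ℝ) ^ (d : ℝ) := by
  intro i j
  have hdet0 : A.det ≠ 0 := hAdet.ne_zero
  have hadj : ‖A.adjugate i j‖ ≤ 1 := by
    rw [Matrix.adjugate_apply]
    refine det_norm_le_one _ (fun a b => ?_)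
    rw [Matrix.updateRow_apply]
    split_ifs with h
    · by_cases hb : i = b <;> simp [Pi.single_apply, hb]
    · exact hA a b
  have hnorm : ‖A.det‖ = (p : ℝ) ^ (-d) := by
    rw [Padic.norm_eq_zpow_neg_valuation hdet0, hd]
  rw [Matrix.inv_def, Matrix.smul_apply, smul_eq_mul, norm_mul,
    Ring.inverse_eq_inv, norm_inv, hnorm]
  have hp1 : (1 : ℝ) < p := by exact_mod_cast (Fact.out : p.Prime).one_lt
  have hppos : (0 : ℝ) < p := by linarith
  calc ((p : ℝ) ^ (-d))⁻¹ * ‖A.adjugate i j‖ ≤ ((p : ℝ) ^ (-d))⁻¹ * 1 := by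
        refine mul_le_mul_of_nonneg_left hadj ?_
        positivity
    _ = (p : ℝ) ^ (d : ℝ) := by
        rw [mul_one, ← zpow_neg, neg_neg, ← Real.rpow_intCast]

/-- Precision of the computed inverse of an integral matrix: if `A` and `A'` are
invertible `p`-adically integral `n × n` matrices over `ℚ_p` agreeing entrywise to
precision `N`, with `v_p(det A) = v_p(det A') = d`, then every entry of `A⁻¹ - A'⁻¹`
has norm at most `p^{2d - N}`. -/
theorem matrix_inverse_precision {p : ℕ} [Fact p.Prime] (n : ℕ) (hn : 0 < n) (N : ℝ)
    (A A' : Matrix (Fin n) (Fin n) ℚ_[p])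
    (hAinv : IsUnit A) (hA'inv : IsUnit A')
    (hA : ∀ i j, ‖A i j‖ ≤ 1) (hA' : ∀ i j, ‖A' i j‖ ≤ 1)
    (hAA' : ∀ i j, ‖A i j - A' i j‖ ≤ (p : ℝ) ^ (-N))
    (d : ℤ) (hd : (A.det).valuation = d) (hd' : (A'.det).valuation = d) :
    ∀ i j, ‖(A⁻¹ - A'⁻¹) i j‖ ≤ (p : ℝ) ^ (2 * (d : ℝ) - N) := by
  intro i j
  have hAdet : IsUnit A.det := (Matrix.isUnit_iff_isUnit_det A).mp hAinv
  have hA'det : IsUnit A'.det := (Matrix.isUnit_iff_isUnit_det A').mp hA'inv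
  have hAi := inv_entry_norm_le A hAdet hA hd
  have hA'i := inv_entry_norm_le A' hA'det hA' hd'
  have key : A⁻¹ - A'⁻¹ = A⁻¹ * (A' - A) * A'⁻¹ := by
    rw [Matrix.mul_sub, Matrix.sub_mul, Matrix.mul_assoc,
      Matrix.mul_nonsing_inv A' hA'det, Matrix.mul_one,
      Matrix.nonsing_inv_mul A hAdet, Matrix.one_mul]
  rw [key]
  have hppos : (0 : ℝ) < p := by exact_mod_cast (Fact.out : p.Prime).pos
  rw [Matrix.mul_apply]
  refine norm_sum_le_of_forall_le_of_nonneg (Real.rpow_nonneg hppos.le _) (fun k _ => ?_)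
  rw [norm_mul]
  have h1 : ‖(A⁻¹ * (A' - A)) i k‖ ≤ (p : ℝ) ^ ((d : ℝ) + -N) := by
    rw [Matrix.mul_apply]
    refine norm_sum_le_of_forall_le_of_nonneg (Real.rpow_nonneg hppos.le _) (fun l _ => ?_)
    rw [norm_mul, Real.rpow_add hppos]
    refine mul_le_mul (hAi i l) ?_ (norm_nonneg _) (Real.rpow_nonneg hppos.le _)
    rw [Matrix.sub_apply, norm_sub_rev]
    exact hAA' l k
  calc ‖(A⁻¹ * (A' - A)) i k‖ * ‖A'⁻¹ k j‖
      ≤ (p : ℝ) ^ ((d : ℝ) + -N) * (p : ℝ) ^ (d : ℝ) :=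
        mul_le_mul h1 (hA'i k j) (norm_nonneg _) (Real.rpow_nonneg hppos.le _)
    _ = (p : ℝ) ^ (2 * (d : ℝ) - N) := by
        rw [← Real.rpow_add hppos]; ring_nf
end

section
/- Let n be a positive integer and let N, N' be real numbers with N' ≤ N. Let A and Ã be invertible n×n matrices over ℚ_p with all entries of p-adic norm at most 1, such that ‖A_{ij} - Ã_{ij}‖_p ≤ p^{-N} for all i, j, and set d = v_p(det A). Let b, b̃ ∈ ℚ_p^n satisfy ‖b_i - b̃_i‖_p ≤ p^{-N'} for all i, and suppose the computed solution x̃ = Ã⁻¹b̃ satisfies ‖x̃_i‖_p ≤ 1 for all i. Then every entry of A⁻¹b - x̃ has p-adic norm at most p^{d - N'}; i.e., the computed solution is correct to precision N' - v_p(det A). -/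
/-!
The error `A⁻¹b - A'⁻¹b'` equals `A⁻¹r`, where `r = b - b' + (A' - A)x'` is the residual of
`x' = A'⁻¹b'` in the exact system. Since `x'` is integral, the ultrametric inequality bounds every
entry of `r` by `max(p^(-N'), p^(-N)) = p^(-N')`. Cramer's rule `A⁻¹ = det(A)⁻¹ adj(A)`, with
`adj(A)` integral, bounds the entries of `A⁻¹` by `‖det A‖⁻¹ = p^d`.
-/

namespace Matrix

theorem norm_mulVec_apply_le_mul {R : Type*} [NormedRing R] [IsUltrametricDist R]
    {m n : Type*} [Fintype n] (M : Matrix m n R) (v : n → R) (i : m) {C D : ℝ}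
    (hC : 0 ≤ C) (hD : 0 ≤ D) (hM : ∀ j, ‖M i j‖ ≤ C) (hv : ∀ j, ‖v j‖ ≤ D) :
    ‖(M *ᵥ v) i‖ ≤ C * D :=
  IsUltrametricDist.norm_sum_le_of_forall_le_of_nonneg (mul_nonneg hC hD) fun j _ =>
    (norm_mul_le _ _).trans (mul_le_mul (hM j) (hv j) (norm_nonneg _) hC)

theorem inv_mulVec_sub_inv_mulVec {K : Type*} [CommRing K] {n : Type*} [Fintype n]
    [DecidableEq n] {A A' : Matrix n n K} (hA : IsUnit A) (hA' : IsUnit A') (b b' : n → K) :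
    A⁻¹ *ᵥ b - A'⁻¹ *ᵥ b' = A⁻¹ *ᵥ (b - b' + (A' - A) *ᵥ (A'⁻¹ *ᵥ b')) := by
  have hdet := (isUnit_iff_isUnit_det A).mp hA
  have hdet' := (isUnit_iff_isUnit_det A').mp hA'
  have hcorrection : A⁻¹ * (A' - A) * A'⁻¹ = A⁻¹ - A'⁻¹ := by
    rw [mul_sub, sub_mul, mul_assoc, mul_nonsing_inv _ hdet', mul_one, nonsing_inv_mul _ hdet,
      one_mul]
  rw [mulVec_add, mulVec_mulVec, mulVec_mulVec, hcorrection, mulVec_sub, sub_mulVec]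
  abel

end Matrix

namespace Padic

variable {p : ℕ} [Fact p.Prime] {n : Type*} [Fintype n] [DecidableEq n]

theorem norm_adjugate_apply_le_one {A : Matrix n n ℚ_[p]} (hA : ∀ i j, ‖A i j‖ ≤ 1)
    (i j : n) : ‖A.adjugate i j‖ ≤ 1 := by
  let B : Matrix n n ℤ_[p] := fun i j => ⟨A i j, hA i j⟩
  have hB : B.map PadicInt.Coe.ringHom = A := rfl
  rw [← hB, ← RingHom.mapMatrix_apply, ← RingHom.map_adjugate]
  exact (B.adjugate i j).norm_le_one

theorem norm_inv_apply_le {A : Matrix n n ℚ_[p]} (hA : ∀ i j, ‖A i j‖ ≤ 1) (i j : n) :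
    ‖A⁻¹ i j‖ ≤ ‖A.det‖⁻¹ := by
  rw [Matrix.inv_def, Ring.inverse_eq_inv, Matrix.smul_apply, smul_eq_mul, norm_mul, norm_inv]
  exact mul_le_of_le_one_right (by positivity) (norm_adjugate_apply_le_one hA i j)

end Padic

theorem coleman_linear_system_precision_general {p : ℕ} [Fact p.Prime] (n : ℕ)
    (N N' : ℝ) (hNN' : N' ≤ N)
    (A A' : Matrix (Fin n) (Fin n) ℚ_[p])
    (hAinv : IsUnit A) (hA'inv : IsUnit A')
    (hA : ∀ i j, ‖A i j‖ ≤ 1)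
    (hAA' : ∀ i j, ‖A i j - A' i j‖ ≤ (p : ℝ) ^ (-N))
    (d : ℤ) (hd : d = (A.det).valuation)
    (b b' : Fin n → ℚ_[p])
    (hb : ∀ i, ‖b i - b' i‖ ≤ (p : ℝ) ^ (-N'))
    (hx' : ∀ i, ‖A'⁻¹.mulVec b' i‖ ≤ 1) :
    ∀ i, ‖(A⁻¹.mulVec b - A'⁻¹.mulVec b') i‖ ≤ (p : ℝ) ^ ((d : ℝ) - N') := by
  intro i
  have hp : (1 : ℝ) < p := by exact_mod_cast (Fact.out : p.Prime).one_lt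
  have hdet : A.det ≠ 0 := ((Matrix.isUnit_iff_isUnit_det A).mp hAinv).ne_zero
  have hresidual : ∀ j, ‖(b - b' + (A' - A).mulVec (A'⁻¹.mulVec b')) j‖ ≤ (p : ℝ) ^ (-N') := by
    intro j
    refine (IsUltrametricDist.norm_add_le_max _ _).trans (max_le (hb j) ?_)
    calc ‖((A' - A).mulVec (A'⁻¹.mulVec b')) j‖ ≤ (p : ℝ) ^ (-N) * 1 :=
          Matrix.norm_mulVec_apply_le_mul _ _ _ (by positivity) zero_le_one
            (fun k => by rw [Matrix.sub_apply, norm_sub_rev]; exact hAA' j k) hx'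
      _ ≤ (p : ℝ) ^ (-N') := by
          rw [mul_one]; exact Real.rpow_le_rpow_of_exponent_le hp.le (neg_le_neg hNN')
  rw [Matrix.inv_mulVec_sub_inv_mulVec hAinv hA'inv]
  calc _ ≤ ‖A.det‖⁻¹ * (p : ℝ) ^ (-N') :=
        Matrix.norm_mulVec_apply_le_mul _ _ _ (by positivity) (by positivity)
          (Padic.norm_inv_apply_le hA i) hresidual
    _ = (p : ℝ) ^ ((d : ℝ) - N') := by
        rw [Padic.norm_eq_zpow_neg_valuation hdet, ← hd, zpow_neg, inv_inv,
          ← Real.rpow_intCast, ← Real.rpow_add (by positivity), sub_eq_add_neg]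

/-- Final precision proposition for Coleman integration: if the integral matrix `A`
(playing the role of `Φ - I`) is accurate to precision `N`, the right-hand side is
accurate to precision `N' ≤ N`, and the computed solution `x' = A'⁻¹b'` is integral,
then `x'` agrees with the true solution `A⁻¹b` to precision `N' - v_p(det A)`. -/
theorem coleman_linear_system_precision {p : ℕ} [Fact p.Prime] (n : ℕ) (hn : 0 < n)
    (N N' : ℝ) (hNN' : N' ≤ N)
    (A A' : Matrix (Fin n) (Fin n) ℚ_[p])
    (hAinv : IsUnit A) (hA'inv : IsUnit A')
    (hA : ∀ i j, ‖A i j‖ ≤ 1) (hA' : ∀ i j, ‖A' i j‖ ≤ 1)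
    (hAA' : ∀ i j, ‖A i j - A' i j‖ ≤ (p : ℝ) ^ (-N))
    (d : ℤ) (hd : d = (A.det).valuation)
    (b b' : Fin n → ℚ_[p])
    (hb : ∀ i, ‖b i - b' i‖ ≤ (p : ℝ) ^ (-N'))
    (hx' : ∀ i, ‖A'⁻¹.mulVec b' i‖ ≤ 1) :
    ∀ i, ‖(A⁻¹.mulVec b - A'⁻¹.mulVec b') i‖ ≤ (p : ℝ) ^ ((d : ℝ) - N') :=
  coleman_linear_system_precision_general n N N' hNN' A A' hAinv hA'inv hA hAA' d hd b b' hb hx'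
end
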